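/- arXiv:2506.08273 — 7 statements merged into one kernel-verified Lean document; each statement's English description precedes it below -/
import Mathlib

section
/- Let d ≥ 2 and 0 < p ≤ 1. Then there exists a constant c = c(p) < ∞, depending only on p, such that for every function u : ℤ₊^d → ℂ for which the left-hand side below is finite, one has ∑_{j ∈ ℤ₊^d \ {0}} |u(j)|^p / ‖j‖_∞ ≤ c · d^{-1} · ∑_{j ∈ ℤ₊^d \ {0}} ∑_{k ∈ ℤ₊^d \ {0}, k ∼ j} |u(j) − u(k)|^p. -/
open scoped ENNReal

/-- The sup-norm `‖x‖_∞` of a point of `ℤ₊^d`, as a real number. -/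
noncomputable def nsup {d : ℕ} (x : Fin d → ℕ) : ℝ := ((Finset.univ.sup x : ℕ) : ℝ)

/-- `x ∼ y`: the Euclidean distance between `x` and `y` equals `1`. -/
def nbr {d : ℕ} (x y : Fin d → ℕ) : Prop := ∑ i, ((x i : ℤ) - (y i : ℤ)) ^ 2 = 1

/-!
Write `m(x) = ‖x‖_∞` and `v = |u|^p`. For `d ≥ 2` there is a flow `F` on the edges `x → x + eᵢ`
of `ℤ₊^d`, vanishing at `0`, with `0 ≤ F ≤ 4/d` and divergence at least `1/m(x)` at every `x ≠ 0`.
Summation by parts turns `∑ v(x)/m(x)` into at most `∑ F(x,i) (v(x) - v(x + eᵢ))`, and since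
`|v(x) - v(y)| ≤ |u(x) - u(y)|^p` for `p ≤ 1`, this is at most `4/d` times the right-hand side.

To sum by parts, the flow is cut off at the cube `[0, n + 1]^d`, at the price of a boundary term
`4 ∑_{m(x) = n + 1} v(x)`. Because `∑ₙ (1/n) ∑_{m(x) = n} v(x)` is the (finite) left-hand side
and the harmonic series diverges, the boundary term is small for infinitely many `n`.
-/

open scoped NNReal

open Finset

lemma ENNReal.tsum_inv_natCast_add_succ_eq_top (N : ℕ) :
    ∑' n : ℕ, ((n + N + 1 : ℕ) : ℝ≥0∞)⁻¹ = ⊤ := by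
  have hcoe : ∀ n : ℕ, ((n + N + 1 : ℕ) : ℝ≥0∞)⁻¹ = (((n + N + 1 : ℕ) : ℝ≥0)⁻¹ : ℝ≥0) := fun n => by
    rw [ENNReal.coe_inv (by positivity), ENNReal.coe_natCast]
  simp only [hcoe, ENNReal.tsum_coe_eq_top_iff_not_summable_coe, NNReal.coe_inv, NNReal.coe_natCast]
  exact mt (summable_nat_add_iff (N + 1) (f := fun n : ℕ => (n : ℝ)⁻¹)).1
    Real.not_summable_natCast_inv

lemma ENNReal.exists_ge_succ_mul_lt_of_tsum_ne_top {b : ℕ → ℝ≥0∞} (hb : ∑' n, b n ≠ ⊤) {ε : ℝ≥0∞}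
    (hε : ε ≠ 0) (N : ℕ) : ∃ n ≥ N, (n + 1) * b n < ε := by
  by_contra! h
  refine hb (top_le_iff.1 ?_)
  calc ⊤ = ε * ∑' n : ℕ, ((n + N + 1 : ℕ) : ℝ≥0∞)⁻¹ := by
        rw [ENNReal.tsum_inv_natCast_add_succ_eq_top, ENNReal.mul_top hε]
    _ ≤ ∑' n, b (n + N) := by
        rw [← ENNReal.tsum_mul_left]
        refine ENNReal.tsum_le_tsum fun n => ?_
        rw [← div_eq_mul_inv, ENNReal.div_le_iff (by simp) (by simp), mul_comm]
        simpa [add_assoc] using h (n + N) (by omega)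
    _ ≤ ∑' n, b n := ENNReal.tsum_comp_le_tsum_of_injective (add_left_injective N) b

lemma abs_norm_rpow_sub_norm_rpow_le {E : Type*} [SeminormedAddCommGroup E] {p : ℝ} (hp0 : 0 < p)
    (hp1 : p ≤ 1) (a b : E) : |‖a‖ ^ p - ‖b‖ ^ p| ≤ ‖a - b‖ ^ p := by
  have key : ∀ a b : E, ‖a‖ ^ p - ‖b‖ ^ p ≤ ‖a - b‖ ^ p := fun a b => by
    have := Real.rpow_add_le_add_rpow (norm_nonneg b) (norm_nonneg (a - b)) hp0.le hp1
    have := Real.rpow_le_rpow (norm_nonneg a) (norm_le_insert' a b) hp0.le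
    linarith
  rw [abs_sub_le_iff]
  exact ⟨key a b, by rw [norm_sub_rev]; exact key b a⟩

namespace LatticeHardy

variable {d : ℕ}

lemma single_le_iff {x : Fin d → ℕ} {i : Fin d} {a : ℕ} : Pi.single i a ≤ x ↔ a ≤ x i := by
  refine ⟨fun h => by simpa using h i, fun h j => ?_⟩
  rcases eq_or_ne j i with rfl | hj
  · simpa using h
  · simp [hj]

lemma add_single_ne_zero (x : Fin d → ℕ) (i : Fin d) : x + Pi.single i 1 ≠ 0 :=
  fun h => by simpa using congrFun h i

lemma nbr_add_single (x : Fin d → ℕ) (i : Fin d) : nbr x (x + Pi.single i 1) := by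
  rw [nbr, Finset.sum_eq_single i (fun j _ hj => by simp [hj]) (by simp)]
  simp

lemma nsup_zero : nsup (0 : Fin d → ℕ) = 0 := by
  simp [nsup]

lemma nsup_nonneg (x : Fin d → ℕ) : 0 ≤ nsup x := Nat.cast_nonneg _

lemma apply_le_nsup (x : Fin d → ℕ) (i : Fin d) : (x i : ℝ) ≤ nsup x := by
  unfold nsup
  exact_mod_cast Finset.le_sup (f := x) (mem_univ i)

lemma one_le_nsup {x : Fin d → ℕ} (hx : x ≠ 0) : 1 ≤ nsup x := by
  obtain ⟨i, hi⟩ := Function.ne_iff.1 hx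
  exact le_trans (by exact_mod_cast Nat.one_le_iff_ne_zero.2 hi) (apply_le_nsup x i)

lemma exists_apply_eq_nsup {x : Fin d → ℕ} (hx : x ≠ 0) : ∃ i, (x i : ℝ) = nsup x := by
  obtain ⟨i, -⟩ := Function.ne_iff.1 hx
  obtain ⟨j, -, hj⟩ := Finset.exists_mem_eq_sup univ ⟨i, mem_univ i⟩ x
  exact ⟨j, by rw [nsup, hj]⟩

lemma nsup_sub_single {x : Fin d → ℕ} {i j : Fin d} (hji : j ≠ i) (hj : (x j : ℝ) = nsup x) :
    nsup (x - Pi.single i 1) = nsup x := by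
  refine le_antisymm ?_ ?_
  · unfold nsup
    exact_mod_cast Finset.sup_mono_fun fun k _ => tsub_le_self
  · calc nsup x = (((x - Pi.single i 1 : Fin d → ℕ) j : ℕ) : ℝ) := by simp [hji, hj]
      _ ≤ _ := apply_le_nsup _ j

/-- The flow on the edge from `x` to `x + eᵢ`: a discretisation of the field `4x / (d ‖x‖_∞)`,
of divergence `4(d - 1) / (d ‖x‖_∞)`, capped at `4/d`. It vanishes at `x = 0` because
`nsup 0 = 0` and `a / 0 = 0`. -/
noncomputable def flow (x : Fin d → ℕ) (i : Fin d) : ℝ :=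
  2 / d * min 2 ((2 * x i + 1) / nsup x)

/-- When `x i = 0` there is no edge into `x` in direction `i` (and `x - eᵢ` would truncate
to `x`). -/
def netFlow (φ : (Fin d → ℕ) → Fin d → ℝ) (x : Fin d → ℕ) (i : Fin d) : ℝ :=
  φ x i - if 1 ≤ x i then φ (x - Pi.single i 1) i else 0

def divergence (φ : (Fin d → ℕ) → Fin d → ℝ) (x : Fin d → ℕ) : ℝ :=
  ∑ i, netFlow φ x i

lemma flow_nonneg (x : Fin d → ℕ) (i : Fin d) : 0 ≤ flow x i := by
  have := nsup_nonneg x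
  unfold flow
  positivity

lemma flow_le (x : Fin d → ℕ) (i : Fin d) : flow x i ≤ 4 / d := by
  unfold flow
  calc 2 / (d : ℝ) * min 2 ((2 * x i + 1) / nsup x) ≤ 2 / d * 2 := by gcongr; exact min_le_left _ _
    _ = 4 / d := by ring

lemma flow_zero (i : Fin d) : flow 0 i = 0 := by
  simp [flow, nsup_zero]

lemma flow_of_apply_eq_nsup {x : Fin d → ℕ} (hx : x ≠ 0) {i : Fin d} (hi : (x i : ℝ) = nsup x) :
    flow x i = 4 / d := by
  have hm := one_le_nsup hx
  rw [flow, min_eq_left]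
  · ring
  rw [hi, le_div_iff₀ (by linarith)]
  linarith

lemma one_div_le_min_sub_min {m a : ℝ} (hm : 0 < m) (ha : a ≤ m) :
    1 / m ≤ min 2 ((2 * a + 1) / m) - min 2 ((2 * (a - 1) + 1) / m) := by
  have hsub : (2 * a + 1) / m - (2 * (a - 1) + 1) / m = 2 / m := by ring
  rcases le_total 2 ((2 * a + 1) / m) with h | h
  · have : (2 * (a - 1) + 1) / m ≤ 2 - 1 / m := by
      rw [div_le_iff₀ hm, sub_mul, one_div_mul_cancel hm.ne']
      linarith
    rw [min_eq_left h]
    linarith [min_le_right 2 ((2 * (a - 1) + 1) / m)]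
  · rw [min_eq_right h]
    have : 1 / m ≤ 2 / m := by gcongr; norm_num
    linarith [min_le_right 2 ((2 * (a - 1) + 1) / m)]

lemma two_div_le_netFlow_flow {x : Fin d → ℕ} (hx : x ≠ 0) {i j : Fin d} (hji : j ≠ i)
    (hj : (x j : ℝ) = nsup x) : 2 / (d * nsup x) ≤ netFlow flow x i := by
  have hm : 0 < nsup x := one_pos.trans_le (one_le_nsup hx)
  have hfac : 2 / (d * nsup x) = 2 / d * (1 / nsup x) := by rw [mul_one_div, div_div]
  rw [netFlow, hfac]
  split_ifs with h1
  · have hcast : (((x - Pi.single i 1 : Fin d → ℕ) i : ℕ) : ℝ) = x i - 1 := by simp [h1]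
    rw [flow, flow, nsup_sub_single hji hj, hcast, ← mul_sub]
    gcongr
    exact one_div_le_min_sub_min hm (apply_le_nsup x i)
  · have hxi : x i = 0 := by omega
    have hle : 1 / nsup x ≤ 2 := by
      rw [div_le_iff₀ hm]
      linarith [one_le_nsup hx]
    rw [flow, hxi, sub_zero, Nat.cast_zero, mul_zero, zero_add, min_eq_right hle]

lemma netFlow_flow_nonneg {x : Fin d → ℕ} (hx : x ≠ 0) (i : Fin d) : 0 ≤ netFlow flow x i := by
  by_cases h : ∃ j ≠ i, (x j : ℝ) = nsup x
  · obtain ⟨j, hji, hj⟩ := h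
    have hm : 0 < nsup x := one_pos.trans_le (one_le_nsup hx)
    have hd : (0 : ℝ) < d := Nat.cast_pos.2 (Fin.pos i)
    exact (by positivity : (0 : ℝ) ≤ 2 / (d * nsup x)).trans (two_div_le_netFlow_flow hx hji hj)
  · push Not at h
    obtain ⟨j, hj⟩ := exists_apply_eq_nsup hx
    obtain rfl : j = i := by_contra fun hji => h j hji hj
    rw [netFlow, flow_of_apply_eq_nsup hx hj, sub_nonneg]
    split_ifs
    · exact flow_le _ _
    · positivity

lemma inv_nsup_le_divergence_flow (hd : 2 ≤ d) (x : Fin d → ℕ) :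
    (nsup x)⁻¹ ≤ divergence flow x := by
  rcases eq_or_ne x 0 with rfl | hx
  · simp [divergence, netFlow, flow_zero, nsup_zero]
  obtain ⟨i₀, hi₀⟩ := exists_apply_eq_nsup hx
  have hm : 0 < nsup x := one_pos.trans_le (one_le_nsup hx)
  have hcard : ((univ.erase i₀).card : ℝ) = d - 1 := by
    rw [card_erase_of_mem (mem_univ _), card_univ, Fintype.card_fin, Nat.cast_pred (by omega)]
  have hd' : (2 : ℝ) ≤ d := by exact_mod_cast hd
  calc (nsup x)⁻¹ ≤ ((univ.erase i₀).card : ℝ) * (2 / (d * nsup x)) := by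
        rw [hcard, show ((d : ℝ) - 1) * (2 / (d * nsup x)) = 2 * (d - 1) / d * (nsup x)⁻¹ by
          field_simp]
        exact le_mul_of_one_le_left (by positivity) (by rw [le_div_iff₀ (by linarith)]; linarith)
    _ ≤ ∑ i ∈ univ.erase i₀, netFlow flow x i := by
        rw [← nsmul_eq_mul]
        exact card_nsmul_le_sum _ _ _ fun i hi =>
          two_div_le_netFlow_flow hx (ne_of_mem_erase hi).symm hi₀
    _ ≤ divergence flow x :=
        sum_le_sum_of_subset_of_nonneg (erase_subset _ _) fun i _ _ => netFlow_flow_nonneg hx i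

def cube (R : ℕ) : Finset (Fin d → ℕ) := Iic fun _ => R

lemma mem_cube {R : ℕ} {x : Fin d → ℕ} : x ∈ cube R ↔ ∀ i, x i ≤ R := by
  simp [cube, Pi.le_def]

lemma cube_mono {R R' : ℕ} (h : R ≤ R') : cube R ⊆ (cube R' : Finset (Fin d → ℕ)) :=
  fun _ hx => mem_cube.2 fun i => (mem_cube.1 hx i).trans h

lemma exists_subset_cube (t : Finset (Fin d → ℕ)) : ∃ R, t ⊆ cube R :=
  ⟨univ.sup (t.sup id), fun _ hx => mem_cube.2 fun i =>
    (le_sup (f := id) hx i).trans (le_sup (f := t.sup id) (mem_univ i))⟩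

lemma add_single_mem_cube {R : ℕ} {x : Fin d → ℕ} (hx : x ∈ cube R) (i : Fin d) :
    x + Pi.single i 1 ∈ cube (R + 1) := by
  refine mem_cube.2 fun j => ?_
  have := mem_cube.1 hx j
  rcases eq_or_ne j i with rfl | hj
  · simpa using this
  · simpa [hj] using this.trans R.le_succ

lemma nsup_of_mem_cube_succ_sdiff {n : ℕ} {x : Fin d → ℕ} (hx : x ∈ cube (n + 1) \ cube n) :
    nsup x = n + 1 := by
  simp only [mem_sdiff, mem_cube, not_forall, not_le] at hx
  obtain ⟨hle, i, hi⟩ := hx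
  have : univ.sup x = n + 1 :=
    le_antisymm (Finset.sup_le fun j _ => hle j) (hi.trans_le (le_sup (mem_univ i)))
  simp [nsup, this]

def truncate (R : ℕ) (φ : (Fin d → ℕ) → Fin d → ℝ) (x : Fin d → ℕ) (i : Fin d) : ℝ :=
  if x + Pi.single i 1 ∈ cube R then φ x i else 0

lemma divergence_truncate {R : ℕ} (φ : (Fin d → ℕ) → Fin d → ℝ) {x : Fin d → ℕ}
    (hx : x ∈ cube R) : divergence (truncate (R + 1) φ) x = divergence φ x := by
  refine sum_congr rfl fun i _ => ?_
  have hout : x + Pi.single i 1 ∈ cube (R + 1) := add_single_mem_cube hx i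
  simp only [netFlow, truncate, if_pos hout]
  split_ifs with h1 hin
  · rfl
  · rw [tsub_add_cancel_of_le (single_le_iff.2 h1)] at hin
    exact absurd (cube_mono R.le_succ hx) hin
  · rfl

lemma neg_le_divergence {φ : (Fin d → ℕ) → Fin d → ℝ} {C : ℝ} (h0 : ∀ x i, 0 ≤ φ x i)
    (hC : ∀ x i, φ x i ≤ C) (x : Fin d → ℕ) : -(d * C) ≤ divergence φ x := by
  calc -(d * C) = ∑ _i : Fin d, -C := by simp
    _ ≤ divergence φ x := sum_le_sum fun i _ => by
        have := h0 x i
        unfold netFlow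
        split_ifs
        · linarith [hC (x - Pi.single i 1) i]
        · linarith [hC x i]

lemma sum_mul_divergence {R : ℕ} {φ : (Fin d → ℕ) → Fin d → ℝ}
    (hφ : ∀ x i, x + Pi.single i 1 ∉ cube R → φ x i = 0) (g : (Fin d → ℕ) → ℝ) :
    ∑ x ∈ cube R, g x * divergence φ x =
      ∑ x ∈ cube R, ∑ i, φ x i * (g x - g (x + Pi.single i 1)) := by
  have shift : ∀ i, ∑ x ∈ cube R, φ x i * g (x + Pi.single i 1) =
      ∑ y ∈ cube R, g y * if 1 ≤ y i then φ (y - Pi.single i 1) i else 0 := by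
    intro i
    refine sum_bij_ne_zero (fun x _ _ => x + Pi.single i 1) (fun x _ hx => ?_)
      (fun _ _ _ _ _ _ h => add_right_cancel h) (fun y hy hne => ?_)
      (fun x _ _ => by simp [mul_comm])
    · by_contra h
      simp [hφ x i h] at hx
    · have h1 : 1 ≤ y i := by by_contra h; simp [h] at hne
      have hy' : y - Pi.single i 1 + Pi.single i 1 = y := tsub_add_cancel_of_le (single_le_iff.2 h1)
      refine ⟨y - Pi.single i 1, ?_, ?_, hy'⟩
      · exact mem_cube.2 fun j => (tsub_le_self (a := y) j).trans (mem_cube.1 hy j)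
      · simp only [if_pos h1] at hne
        rwa [hy', mul_comm]
  simp only [divergence, netFlow, mul_sub, mul_sum, sum_sub_distrib]
  congr 1
  · simp only [mul_comm]
  · rw [sum_comm]
    simp only [← shift]
    exact sum_comm

lemma sum_sum_mul_le_mul_sum_abs {B : Finset (Fin d → ℕ)} {φ h : (Fin d → ℕ) → Fin d → ℝ} {C : ℝ}
    (h0 : ∀ x i, 0 ≤ φ x i) (hC : ∀ x i, φ x i ≤ C) (hφ0 : ∀ i, φ 0 i = 0) :
    ∑ x ∈ B, ∑ i, φ x i * h x i ≤ C * ∑ x ∈ B with x ≠ 0, ∑ i, |h x i| := by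
  rw [sum_filter, mul_sum]
  refine sum_le_sum fun x _ => ?_
  split_ifs with hx
  · rw [mul_sum]
    exact sum_le_sum fun i _ => (le_abs_self _).trans <| by
      rw [abs_mul, abs_of_nonneg (h0 x i)]
      exact mul_le_mul_of_nonneg_right (hC x i) (abs_nonneg _)
  · simp [not_not.1 hx, hφ0]

lemma sum_cube_rpow_div_nsup_le (hd : 2 ≤ d) {p : ℝ} (hp0 : 0 < p) (hp1 : p ≤ 1)
    (u : (Fin d → ℕ) → ℂ) (n : ℕ) :
    ∑ x ∈ cube n, ‖u x‖ ^ p / nsup x ≤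
      4 / d * ∑ x ∈ cube (n + 1) with x ≠ 0, ∑ i, ‖u x - u (x + Pi.single i 1)‖ ^ p
        + 4 * ∑ x ∈ cube (n + 1) \ cube n, ‖u x‖ ^ p := by
  set v : (Fin d → ℕ) → ℝ := fun x => ‖u x‖ ^ p
  set φ := truncate (n + 1) flow
  have hφ0 : ∀ x i, 0 ≤ φ x i := fun x i => by
    unfold φ truncate; split_ifs <;> simp [flow_nonneg]
  have hφC : ∀ x i, φ x i ≤ 4 / d := fun x i => by
    unfold φ truncate; split_ifs
    · exact flow_le x i
    · positivity
  have hd0 : (d : ℝ) ≠ 0 := by positivity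
  have inner : ∀ x ∈ cube n, v x / nsup x ≤ v x * divergence φ x := fun x hx => by
    rw [divergence_truncate flow hx, div_eq_mul_inv]
    exact mul_le_mul_of_nonneg_left (inv_nsup_le_divergence_flow hd x) (by positivity)
  have outer : ∀ x, -(4 * v x) ≤ v x * divergence φ x := fun x => by
    have := neg_le_divergence hφ0 hφC x
    rw [mul_div_cancel₀ _ hd0] at this
    nlinarith [show 0 ≤ v x by positivity]
  have edges : ∑ x ∈ cube (n + 1), v x * divergence φ x ≤
      4 / d * ∑ x ∈ cube (n + 1) with x ≠ 0, ∑ i, ‖u x - u (x + Pi.single i 1)‖ ^ p := by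
    rw [sum_mul_divergence (φ := φ) (fun x i h => if_neg h) v]
    refine (sum_sum_mul_le_mul_sum_abs hφ0 hφC (fun i => by simp [φ, truncate, flow_zero])).trans ?_
    gcongr with x _ i
    exact abs_norm_rpow_sub_norm_rpow_le hp0 hp1 _ _
  have hsplit := sum_sdiff (f := fun x => v x * divergence φ x) (cube_mono n.le_succ)
  have hinner := sum_le_sum inner
  have houter := sum_le_sum fun x (_ : x ∈ cube (n + 1) \ cube n) => outer x
  simp only [sum_neg_distrib, ← mul_sum] at houter
  linarith

lemma sum_add_single_le_tsum_nbr (x : Fin d → ℕ) (g : (Fin d → ℕ) → ℝ≥0∞) :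
    ∑ i, g (x + Pi.single i 1) ≤ ∑' k : {k : Fin d → ℕ // k ≠ 0 ∧ nbr x k}, g k := by
  let e : Fin d → {k : Fin d → ℕ // k ≠ 0 ∧ nbr x k} := fun i =>
    ⟨x + Pi.single i 1, add_single_ne_zero x i, nbr_add_single x i⟩
  have he : Function.Injective e := fun i j h => by
    simpa [Pi.single_apply, eq_comm] using congrFun (add_left_cancel (congrArg Subtype.val h)) i
  calc ∑ i, g (x + Pi.single i 1) = ∑ k ∈ univ.map ⟨e, he⟩, g k.1 := by simp [e]
    _ ≤ _ := ENNReal.sum_le_tsum _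

lemma tsum_sum_cube_succ_sdiff_le (f : (Fin d → ℕ) → ℝ≥0∞) :
    ∑' n, ∑ x ∈ cube (n + 1) \ cube n, f x ≤ ∑' x, f x := by
  have partial_le : ∀ N, ∑ n ∈ range N, ∑ x ∈ cube (n + 1) \ cube n, f x ≤ ∑ x ∈ cube N, f x := by
    intro N
    induction N with
    | zero => simp
    | succ N ih =>
      rw [sum_range_succ, ← sum_sdiff (cube_mono N.le_succ), add_comm]
      gcongr
  rw [ENNReal.tsum_eq_iSup_nat]
  exact iSup_le fun N => (partial_le N).trans (ENNReal.sum_le_tsum _)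

lemma sum_cube_ofReal_le (hd : 2 ≤ d) {p : ℝ} (hp0 : 0 < p) (hp1 : p ≤ 1)
    (u : (Fin d → ℕ) → ℂ) {R n : ℕ} (hRn : R ≤ n) :
    ∑ x ∈ cube R, ENNReal.ofReal (‖u x‖ ^ p / nsup x) ≤
      ENNReal.ofReal (4 / d) * ∑' (j : {j : Fin d → ℕ // j ≠ 0})
          (k : {k : Fin d → ℕ // k ≠ 0 ∧ nbr j.1 k}), ENNReal.ofReal (‖u j.1 - u k.1‖ ^ p)
        + 4 * ((n + 1) * ∑ x ∈ cube (n + 1) \ cube n, ENNReal.ofReal (‖u x‖ ^ p / nsup x)) := by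
  have edges : ENNReal.ofReal
      (∑ x ∈ cube (n + 1) with x ≠ 0, ∑ i, ‖u x - u (x + Pi.single i 1)‖ ^ p) ≤
      ∑' (j : {j : Fin d → ℕ // j ≠ 0}) (k : {k : Fin d → ℕ // k ≠ 0 ∧ nbr j.1 k}),
        ENNReal.ofReal (‖u j.1 - u k.1‖ ^ p) := by
    rw [ENNReal.ofReal_sum_of_nonneg fun _ _ => by positivity, ← sum_subtype_eq_sum_filter]
    refine le_trans (sum_le_sum fun j _ => ?_) (ENNReal.sum_le_tsum _)
    rw [ENNReal.ofReal_sum_of_nonneg fun _ _ => by positivity]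
    exact sum_add_single_le_tsum_nbr j.1 fun k => ENNReal.ofReal (‖u j.1 - u k‖ ^ p)
  have shell : ENNReal.ofReal (∑ x ∈ cube (n + 1) \ cube n, ‖u x‖ ^ p) =
      (n + 1) * ∑ x ∈ cube (n + 1) \ cube n, ENNReal.ofReal (‖u x‖ ^ p / nsup x) := by
    rw [ENNReal.ofReal_sum_of_nonneg fun _ _ => by positivity, mul_sum]
    refine sum_congr rfl fun x hx => ?_
    rw [nsup_of_mem_cube_succ_sdiff hx, show ((n : ℝ≥0∞) + 1) = ENNReal.ofReal (n + 1) by norm_cast,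
      ← ENNReal.ofReal_mul (by positivity), mul_div_cancel₀ _ (by positivity)]
  calc ∑ x ∈ cube R, ENNReal.ofReal (‖u x‖ ^ p / nsup x)
      ≤ ∑ x ∈ cube n, ENNReal.ofReal (‖u x‖ ^ p / nsup x) := sum_le_sum_of_subset (cube_mono hRn)
    _ = ENNReal.ofReal (∑ x ∈ cube n, ‖u x‖ ^ p / nsup x) :=
        (ENNReal.ofReal_sum_of_nonneg fun x _ => div_nonneg (by positivity) (nsup_nonneg x)).symm
    _ ≤ ENNReal.ofReal (4 / d * ∑ x ∈ cube (n + 1) with x ≠ 0,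
            ∑ i, ‖u x - u (x + Pi.single i 1)‖ ^ p + 4 * ∑ x ∈ cube (n + 1) \ cube n, ‖u x‖ ^ p) :=
        ENNReal.ofReal_le_ofReal (sum_cube_rpow_div_nsup_le hd hp0 hp1 u n)
    _ ≤ _ := by
        refine ENNReal.ofReal_add_le.trans ?_
        rw [ENNReal.ofReal_mul (by positivity), ENNReal.ofReal_mul (by norm_num), shell]
        gcongr
        norm_num

end LatticeHardy

open LatticeHardy in
/-- Discrete Hardy inequality on `ℤ₊^d` for `0 < p ≤ 1 < d`, with constant `c(p)/d`. -/
theorem hardy_p_small (p : ℝ) (hp0 : 0 < p) (hp1 : p ≤ 1) :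
    ∃ c : ℝ, 0 ≤ c ∧ ∀ (d : ℕ), 2 ≤ d → ∀ u : (Fin d → ℕ) → ℂ,
      (∑' (j : {j : Fin d → ℕ // j ≠ 0}),
          ENNReal.ofReal (‖u j.1‖ ^ p / nsup j.1)) ≠ ⊤ →
      (∑' (j : {j : Fin d → ℕ // j ≠ 0}),
          ENNReal.ofReal (‖u j.1‖ ^ p / nsup j.1))
        ≤ ENNReal.ofReal (c / d) *
            ∑' (j : {j : Fin d → ℕ // j ≠ 0})
              (k : {k : Fin d → ℕ // k ≠ 0 ∧ nbr j.1 k}),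
              ENNReal.ofReal (‖u j.1 - u k.1‖ ^ p) := by
  refine ⟨4, by norm_num, fun d hd u hT => ?_⟩
  set f : (Fin d → ℕ) → ℝ≥0∞ := fun x => ENNReal.ofReal (‖u x‖ ^ p / nsup x)
  -- the term at `0` is `ofReal (‖u 0‖ ^ p / 0) = 0`
  have hf : ∑' j : {j : Fin d → ℕ // j ≠ 0}, f j = ∑' x, f x :=
    tsum_subtype_eq_of_support_subset (s := {j | j ≠ 0}) <|
      Function.support_subset_iff'.2 fun x (hx : ¬x ≠ 0) => by simp [f, not_not.1 hx, nsup_zero]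
  change ∑' j : {j : Fin d → ℕ // j ≠ 0}, f j ≠ ⊤ at hT
  change ∑' j : {j : Fin d → ℕ // j ≠ 0}, f j ≤ _
  rw [hf] at hT ⊢
  have hshells : ∑' n, ∑ x ∈ cube (n + 1) \ cube n, f x ≠ ⊤ :=
    ne_top_of_le_ne_top hT (tsum_sum_cube_succ_sdiff_le f)
  rw [ENNReal.tsum_eq_iSup_sum' cube exists_subset_cube]
  refine iSup_le fun R => ENNReal.le_of_forall_pos_le_add fun ε hε _ => ?_
  obtain ⟨n, hRn, hn⟩ := ENNReal.exists_ge_succ_mul_lt_of_tsum_ne_top hshells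
    (ε := ε / 4) (by simpa using hε.ne') R
  calc ∑ x ∈ cube R, f x ≤ _ := sum_cube_ofReal_le hd hp0 hp1 u hRn
    _ ≤ _ + 4 * (ε / 4) := by gcongr
    _ = _ := by rw [ENNReal.mul_div_cancel (by norm_num) (by norm_num)]
end

section
/- Let 0 < d < p. Then there exists a constant c = c(d, p) < ∞ such that for every function u : ℤ₊^d → ℂ with u(0) = 0, one has ∑_{j ∈ ℤ₊^d \ {0}} |u(j)|^p / ‖j‖_∞^p ≤ c · ∑_{j ∈ ℤ₊^d \ {0}} ∑_{k ∈ ℤ₊^d, k ∼ j} |u(j) − u(k)|^p. -/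
open scoped ENNReal

/-!
Fix `d - 1 < s < p - 1`. Join `0` to `j`, where `n = ‖j‖_∞`, by the lattice path through the
points `⌊m j / n⌋`, `m = 0, …, n`, each step of which is a staircase of at most `d` unit edges.
Hölder's inequality with weights `(m + 1)^s` bounds `|u(j)|^p / n^p` by a constant times the
sum, over the edges `(x, x + e_t)` of the `m`-th staircases, of
`(m + 1)^s n^(-1-s) |u(x + e_t) - u(x)|^p`. Such an edge occurs in the `m`-th staircase of the
path to `j` only for `m + 1 ∈ [‖x‖_∞, ‖x‖_∞ + 2]`, and then `j / n` lies within `2 / (m + 1)` of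
`x / (m + 1)` with one coordinate of `j` equal to `n`: there are `O((n / (m + 1))^(d-1))` such
`j` of norm `n`. As `s > d - 1`, the total weight `∑_{n > m} (m + 1)^(s+1-d) n^(d-2-s)` received
by an edge is bounded, which gives the inequality after exchanging the order of summation.
-/

open Finset Real

lemma exists_rpow_add_one_sub_rpow_eq (e : ℝ) {a : ℝ} (ha : 0 ≤ a) (h : 0 < e ∨ 0 < a) :
    ∃ ξ ∈ Set.Ioo a (a + 1), (a + 1) ^ e - a ^ e = e * ξ ^ (e - 1) := by
  have hcont : ContinuousOn (fun x : ℝ => x ^ e) (Set.Icc a (a + 1)) := fun x hx =>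
    (continuousAt_rpow_const x e (h.symm.imp (fun ha => (ha.trans_le hx.1).ne') le_of_lt)
      ).continuousWithinAt
  have hdiff : DifferentiableOn ℝ (fun x : ℝ => x ^ e) (Set.Ioo a (a + 1)) := fun x hx =>
    (differentiableAt_rpow_const_of_ne e (ha.trans_lt hx.1).ne').differentiableWithinAt
  obtain ⟨ξ, hξ, hder⟩ := exists_deriv_eq_slope _ (lt_add_one a) hcont hdiff
  refine ⟨ξ, hξ, ?_⟩
  rw [Real.deriv_rpow_const, add_sub_cancel_left, div_one] at hder
  exact hder.symm

lemma sum_range_rpow_neg_le {σ : ℝ} (hσ₀ : 0 ≤ σ) (hσ₁ : σ < 1) (n : ℕ) :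
    ∑ m ∈ range n, ((m : ℝ) + 1) ^ (-σ) ≤ (1 - σ)⁻¹ * (n : ℝ) ^ (1 - σ) := by
  have hσ : 0 < 1 - σ := by linarith
  have step (m : ℕ) :
      ((m : ℝ) + 1) ^ (-σ) ≤ (1 - σ)⁻¹ * (((m + 1 : ℕ) : ℝ) ^ (1 - σ) - (m : ℝ) ^ (1 - σ)) := by
    obtain ⟨ξ, hξ, heq⟩ := exists_rpow_add_one_sub_rpow_eq (1 - σ) m.cast_nonneg (.inl hσ)
    rw [le_inv_mul_iff₀ hσ, Nat.cast_succ, heq, sub_sub_cancel_left]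
    exact mul_le_mul_of_nonneg_left
      (rpow_le_rpow_of_nonpos (m.cast_nonneg.trans_lt hξ.1) hξ.2.le (by linarith)) hσ.le
  calc ∑ m ∈ range n, ((m : ℝ) + 1) ^ (-σ)
      ≤ ∑ m ∈ range n, (1 - σ)⁻¹ * (((m + 1 : ℕ) : ℝ) ^ (1 - σ) - (m : ℝ) ^ (1 - σ)) :=
        sum_le_sum fun m _ => step m
    _ = (1 - σ)⁻¹ * (n : ℝ) ^ (1 - σ) := by
        rw [← mul_sum, sum_range_sub (fun m : ℕ => (m : ℝ) ^ (1 - σ)), Nat.cast_zero,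
          zero_rpow hσ.ne', sub_zero]

lemma rpow_neg_le_mul_rpow_sub_rpow {r : ℝ} (hr : 1 < r) {n : ℕ} (hn : 1 ≤ n) :
    (n : ℝ) ^ (-r) ≤ 2 ^ r / (r - 1) * ((n : ℝ) ^ (1 - r) - ((n + 1 : ℕ) : ℝ) ^ (1 - r)) := by
  have hn₀ : (0 : ℝ) < n := by exact_mod_cast hn
  obtain ⟨ξ, hξ, heq⟩ := exists_rpow_add_one_sub_rpow_eq (1 - r) n.cast_nonneg (.inr hn₀)
  have hdiff : (n : ℝ) ^ (1 - r) - ((n : ℝ) + 1) ^ (1 - r) = (r - 1) * ξ ^ (-r) := by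
    rw [sub_sub_cancel_left] at heq
    linarith
  have hξ_lower : (2 * (n : ℝ)) ^ (-r) ≤ ξ ^ (-r) :=
    rpow_le_rpow_of_nonpos (hn₀.trans hξ.1)
      (by linarith [hξ.2, (Nat.one_le_cast.mpr hn : (1 : ℝ) ≤ n)]) (by linarith)
  rw [mul_rpow zero_le_two hn₀.le, rpow_neg zero_le_two] at hξ_lower
  have hr₁ : 0 < r - 1 := by linarith
  rw [Nat.cast_succ, hdiff]
  calc (n : ℝ) ^ (-r) = 2 ^ r / (r - 1) * ((r - 1) * ((2 ^ r)⁻¹ * (n : ℝ) ^ (-r))) := by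
        field_simp
    _ ≤ 2 ^ r / (r - 1) * ((r - 1) * ξ ^ (-r)) := by gcongr

lemma tsum_rpow_neg_le {r : ℝ} (hr : 1 < r) {q : ℕ} (hq : 1 ≤ q) :
    ∑' n : ℕ, (if q ≤ n then ENNReal.ofReal ((n : ℝ) ^ (-r)) else 0)
      ≤ ENNReal.ofReal (2 ^ r / (r - 1) * (q : ℝ) ^ (1 - r)) := by
  set F : ℕ → ℝ≥0∞ := fun n => if q ≤ n then ENNReal.ofReal ((n : ℝ) ^ (-r)) else 0
  rw [← (ENNReal.summable (f := fun n => F (n + q))).sum_add_tsum_nat_add',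
    sum_eq_zero fun n hn => if_neg (by simpa using hn), zero_add]
  simp only [F, le_add_iff_nonneg_left, zero_le, if_true]
  refine ENNReal.tsum_le_of_sum_range_le fun N => ?_
  rw [← ENNReal.ofReal_sum_of_nonneg fun n _ => by positivity]
  refine ENNReal.ofReal_le_ofReal ?_
  set f : ℕ → ℝ := fun n => 2 ^ r / (r - 1) * ((n + q : ℕ) : ℝ) ^ (1 - r)
  calc ∑ n ∈ range N, ((n + q : ℕ) : ℝ) ^ (-r)
      ≤ ∑ n ∈ range N, (f n - f (n + 1)) := by
        refine sum_le_sum fun n _ => ?_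
        rw [← mul_sub, add_right_comm]
        exact rpow_neg_le_mul_rpow_sub_rpow hr (by omega)
    _ = f 0 - f N := sum_range_sub' f N
    _ ≤ f 0 := sub_le_self _ (by positivity)
    _ = _ := by simp [f]

lemma rpow_sum_le_rpow_sum_weight_mul {ι : Type*} (s : Finset ι) {p : ℝ} (hp : 1 ≤ p)
    {w c : ι → ℝ} (hw : ∀ i, 0 < w i) (hc : ∀ i, 0 ≤ c i) :
    (∑ i ∈ s, c i) ^ p ≤ (∑ i ∈ s, w i) ^ (p - 1) * ∑ i ∈ s, w i ^ (1 - p) * c i ^ p := by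
  have hp₀ : 0 < p := by linarith
  have holder := inner_le_weight_mul_Lp_of_nonneg s hp w (fun i => c i / w i)
    (fun i => (hw i).le) (fun i => div_nonneg (hc i) (hw i).le)
  have hcw (i : ι) : w i * (c i / w i) = c i := mul_div_cancel₀ _ (hw i).ne'
  have hcwp (i : ι) : w i * (c i / w i) ^ p = w i ^ (1 - p) * c i ^ p := by
    rw [div_rpow (hc i) (hw i).le, rpow_sub (hw i), rpow_one]
    field_simp
  simp only [hcw, hcwp] at holder
  have hW : 0 ≤ ∑ i ∈ s, w i := sum_nonneg fun i _ => (hw i).le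
  have hC : 0 ≤ ∑ i ∈ s, w i ^ (1 - p) * c i ^ p :=
    sum_nonneg fun i _ => mul_nonneg (rpow_nonneg (hw i).le _) (rpow_nonneg (hc i) _)
  calc (∑ i ∈ s, c i) ^ p
      ≤ ((∑ i ∈ s, w i) ^ (1 - p⁻¹) * (∑ i ∈ s, w i ^ (1 - p) * c i ^ p) ^ p⁻¹) ^ p :=
        rpow_le_rpow (sum_nonneg fun i _ => hc i) holder hp₀.le
    _ = (∑ i ∈ s, w i) ^ (p - 1) * ∑ i ∈ s, w i ^ (1 - p) * c i ^ p := by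
        rw [mul_rpow (rpow_nonneg hW _) (rpow_nonneg hC _), ← rpow_mul hW, ← rpow_mul hC,
          inv_mul_cancel₀ hp₀.ne', rpow_one, sub_mul, inv_mul_cancel₀ hp₀.ne', one_mul]

lemma rpow_sum_range_le {p s : ℝ} (hp : 1 < p) (hs₀ : 0 ≤ s) (hs : s < p - 1) (n : ℕ)
    {c : ℕ → ℝ} (hc : ∀ m, 0 ≤ c m) :
    (∑ m ∈ range n, c m) ^ p ≤
      (1 - s / (p - 1))⁻¹ ^ (p - 1) * (n : ℝ) ^ (p - 1 - s) *
        ∑ m ∈ range n, ((m : ℝ) + 1) ^ s * c m ^ p := by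
  have hp₁ : 0 < p - 1 := by linarith
  set σ := s / (p - 1)
  have hσ₀ : 0 ≤ σ := div_nonneg hs₀ hp₁.le
  have hσ₁ : σ < 1 := (div_lt_one hp₁).mpr hs
  have hσs : σ * (p - 1) = s := div_mul_cancel₀ s hp₁.ne'
  have hweight (m : ℕ) : (((m : ℝ) + 1) ^ (-σ)) ^ (1 - p) = ((m : ℝ) + 1) ^ s := by
    rw [← rpow_mul (by positivity)]
    congr 1
    linear_combination hσs
  have hW : (∑ m ∈ range n, ((m : ℝ) + 1) ^ (-σ)) ^ (p - 1) ≤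
      (1 - σ)⁻¹ ^ (p - 1) * (n : ℝ) ^ (p - 1 - s) := by
    calc (∑ m ∈ range n, ((m : ℝ) + 1) ^ (-σ)) ^ (p - 1)
        ≤ ((1 - σ)⁻¹ * (n : ℝ) ^ (1 - σ)) ^ (p - 1) :=
          rpow_le_rpow (sum_nonneg fun m _ => by positivity)
            (sum_range_rpow_neg_le hσ₀ hσ₁ n) hp₁.le
      _ = (1 - σ)⁻¹ ^ (p - 1) * (n : ℝ) ^ (p - 1 - s) := by
          rw [mul_rpow (inv_nonneg.mpr (by linarith)) (by positivity), ← rpow_mul n.cast_nonneg]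
          congr 2
          linear_combination -hσs
  calc (∑ m ∈ range n, c m) ^ p
      ≤ (∑ m ∈ range n, ((m : ℝ) + 1) ^ (-σ)) ^ (p - 1) *
          ∑ m ∈ range n, (((m : ℝ) + 1) ^ (-σ)) ^ (1 - p) * c m ^ p :=
        rpow_sum_le_rpow_sum_weight_mul _ hp.le (fun m => by positivity) hc
    _ ≤ _ := by
        simp only [hweight]
        exact mul_le_mul_of_nonneg_right hW
          (sum_nonneg fun m _ => mul_nonneg (by positivity) (rpow_nonneg (hc m) _))

lemma tsum_mul_comp_le_mul_tsum {α β : Type*} [DecidableEq β] (f : α → β) (c : α → ℝ≥0∞)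
    (g : β → ℝ≥0∞) {C : ℝ≥0∞} (hC : ∀ b, ∑' a, (if f a = b then c a else 0) ≤ C) :
    ∑' a, c a * g (f a) ≤ C * ∑' b, g b := by
  calc ∑' a, c a * g (f a) = ∑' a, ∑' b, if f a = b then c a * g b else 0 :=
        tsum_congr fun a => (tsum_ite_eq' (f a) fun b => c a * g b).symm
    _ = ∑' b, (∑' a, if f a = b then c a else 0) * g b := by
        rw [ENNReal.tsum_comm]
        refine tsum_congr fun b => ?_
        rw [← ENNReal.tsum_mul_right]
        exact tsum_congr fun a => by split_ifs <;> simp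
    _ ≤ ∑' b, C * g b := ENNReal.tsum_le_tsum fun b => mul_le_mul_left (hC b) _
    _ = C * ∑' b, g b := ENNReal.tsum_mul_left

section LatticePath

variable {d : ℕ}

def supNorm (j : Fin d → ℕ) : ℕ := univ.sup j

def segmentPoint (j : Fin d → ℕ) (m : ℕ) : Fin d → ℕ := fun i => m * j i / supNorm j

def stairPoint (j : Fin d → ℕ) (m t : ℕ) : Fin d → ℕ :=
  fun i => if (i : ℕ) < t then segmentPoint j (m + 1) i else segmentPoint j m i

lemma le_supNorm (j : Fin d → ℕ) (i : Fin d) : j i ≤ supNorm j := le_sup (mem_univ i)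

lemma exists_eq_supNorm {j : Fin d → ℕ} (hj : 0 < supNorm j) : ∃ i, j i = supNorm j := by
  have : (univ : Finset (Fin d)).Nonempty := nonempty_of_ne_empty fun h => by
    simp [supNorm, h] at hj
  obtain ⟨i, -, hi⟩ := exists_mem_eq_sup univ this j
  exact ⟨i, hi.symm⟩

lemma segmentPoint_zero (j : Fin d → ℕ) : segmentPoint j 0 = 0 := by
  ext i; simp [segmentPoint]

lemma segmentPoint_supNorm (j : Fin d → ℕ) : segmentPoint j (supNorm j) = j := by
  ext i
  rcases (supNorm j).eq_zero_or_pos with h | h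
  · simpa [segmentPoint, h, eq_comm] using (le_supNorm j i).trans h.le
  · exact Nat.mul_div_cancel_left _ h

lemma segmentPoint_le_succ (j : Fin d → ℕ) (m : ℕ) (i : Fin d) :
    segmentPoint j m i ≤ segmentPoint j (m + 1) i :=
  Nat.div_le_div_right (Nat.mul_le_mul_right _ m.le_succ)

lemma segmentPoint_succ_le (j : Fin d → ℕ) (m : ℕ) (i : Fin d) :
    segmentPoint j (m + 1) i ≤ segmentPoint j m i + 1 := by
  rcases (supNorm j).eq_zero_or_pos with h | h
  · simp [segmentPoint, h]
  calc (m + 1) * j i / supNorm j ≤ (m * j i + supNorm j) / supNorm j :=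
        Nat.div_le_div_right (by linarith [le_supNorm j i])
    _ = m * j i / supNorm j + 1 := Nat.add_div_right _ h

lemma stairPoint_zero (j : Fin d → ℕ) (m : ℕ) : stairPoint j m 0 = segmentPoint j m := by
  ext i; simp [stairPoint]

lemma stairPoint_dim (j : Fin d → ℕ) (m : ℕ) : stairPoint j m d = segmentPoint j (m + 1) := by
  ext i; simp [stairPoint, i.isLt]

lemma stairPoint_succ (j : Fin d → ℕ) (m : ℕ) (t : Fin d) :
    stairPoint j m (t + 1) = stairPoint j m t ∨
      stairPoint j m (t + 1) = stairPoint j m t + Pi.single t 1 := by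
  have hupdate : stairPoint j m (t + 1) =
      Function.update (stairPoint j m t) t (segmentPoint j (m + 1) t) := by
    ext i
    rcases eq_or_ne i t with rfl | hi
    · simp [stairPoint]
    · simp [stairPoint, Function.update_of_ne hi, hi.le_iff_lt]
  have hat : stairPoint j m t t = segmentPoint j m t := by simp [stairPoint]
  rcases (segmentPoint_le_succ j m t).eq_or_lt with h | h
  · left
    rw [hupdate, ← h, ← hat, Function.update_eq_self]
  · right
    rw [hupdate, ← Function.update_eq_self t (stairPoint j m t), hat]
    ext i
    rcases eq_or_ne i t with rfl | hi
    · simp only [Function.update_self, Pi.add_apply, Pi.single_eq_same]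
      exact le_antisymm (segmentPoint_succ_le j m i) h
    · simp [Function.update_of_ne hi, Pi.single_eq_of_ne hi]

lemma norm_stairPoint_succ_sub_le {E : Type*} [SeminormedAddCommGroup E]
    (u : (Fin d → ℕ) → E) (j : Fin d → ℕ) (m : ℕ) (t : Fin d) :
    ‖u (stairPoint j m (t + 1)) - u (stairPoint j m t)‖ ≤
      ‖u (stairPoint j m t + Pi.single t 1) - u (stairPoint j m t)‖ := by
  rcases stairPoint_succ j m t with h | h <;> rw [h]
  · simp

lemma norm_sub_le_sum_edges {E : Type*} [SeminormedAddCommGroup E]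
    (u : (Fin d → ℕ) → E) (j : Fin d → ℕ) :
    ‖u j - u 0‖ ≤ ∑ m ∈ range (supNorm j), ∑ t : Fin d,
      ‖u (stairPoint j m t + Pi.single t 1) - u (stairPoint j m t)‖ := by
  have hsegment (m : ℕ) : u (segmentPoint j (m + 1)) - u (segmentPoint j m) =
      ∑ t ∈ range d, (u (stairPoint j m (t + 1)) - u (stairPoint j m t)) := by
    rw [sum_range_sub (fun t => u (stairPoint j m t)), stairPoint_dim, stairPoint_zero]
  have htelescope : u j - u 0 = ∑ m ∈ range (supNorm j), ∑ t : Fin d,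
      (u (stairPoint j m (t + 1)) - u (stairPoint j m t)) := by
    conv_lhs => rw [← segmentPoint_supNorm j, ← segmentPoint_zero j]
    rw [← sum_range_sub (fun m => u (segmentPoint j m))]
    refine sum_congr rfl fun m _ => ?_
    rw [hsegment,
      Fin.sum_univ_eq_sum_range (fun t => u (stairPoint j m (t + 1)) - u (stairPoint j m t))]
  rw [htelescope]
  refine (norm_sum_le _ _).trans (sum_le_sum fun m _ => (norm_sum_le _ _).trans ?_)
  exact sum_le_sum fun t _ => norm_stairPoint_succ_sub_le u j m t

def IsNearScaled (j : Fin d → ℕ) (m : ℕ) (x : Fin d → ℕ) : Prop :=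
  ∀ i, supNorm j * x i ≤ (m + 1) * j i ∧ (m + 1) * j i ≤ supNorm j * x i + 2 * supNorm j

lemma isNearScaled_stairPoint {j : Fin d → ℕ} {m : ℕ} (hm : m < supNorm j) (t : ℕ) :
    IsNearScaled j m (stairPoint j m t) := by
  have hn : 0 < supNorm j := by omega
  intro i
  have hlo : segmentPoint j m i ≤ stairPoint j m t i := by
    unfold stairPoint; split_ifs
    exacts [segmentPoint_le_succ j m i, le_rfl]
  have hhi : stairPoint j m t i ≤ segmentPoint j (m + 1) i := by
    unfold stairPoint; split_ifs
    exacts [le_rfl, segmentPoint_le_succ j m i]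
  have hdiv := Nat.div_add_mod (m * j i) (supNorm j)
  have hmod := Nat.mod_lt (m * j i) hn
  have hdiv' := Nat.div_mul_le_self ((m + 1) * j i) (supNorm j)
  have hji := le_supNorm j i
  unfold segmentPoint at hlo hhi
  constructor
  · calc supNorm j * stairPoint j m t i ≤ supNorm j * ((m + 1) * j i / supNorm j) :=
          Nat.mul_le_mul_left _ hhi
      _ ≤ (m + 1) * j i := by rw [mul_comm]; exact hdiv'
  · have := Nat.mul_le_mul_left (supNorm j) hlo
    linarith

instance (j : Fin d → ℕ) (m : ℕ) : DecidablePred (IsNearScaled j m) := fun _ =>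
  Fintype.decidableForallFintype

namespace IsNearScaled

variable {j x : Fin d → ℕ} {m : ℕ}

lemma supNorm_le (hx : IsNearScaled j m x) (hj : 0 < supNorm j) : supNorm x ≤ m + 1 :=
  Finset.sup_le fun i _ => Nat.le_of_mul_le_mul_left (by
    calc supNorm j * x i ≤ (m + 1) * j i := (hx i).1
      _ ≤ (m + 1) * supNorm j := Nat.mul_le_mul_left _ (le_supNorm j i)
      _ = supNorm j * (m + 1) := mul_comm _ _) hj

lemma le_supNorm_add_two (hx : IsNearScaled j m x) (hj : 0 < supNorm j) :
    m + 1 ≤ supNorm x + 2 := by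
  obtain ⟨i, hi⟩ := exists_eq_supNorm hj
  have h := (hx i).2
  rw [hi] at h
  have : m + 1 ≤ x i + 2 := Nat.le_of_mul_le_mul_left (by linarith) hj
  linarith [le_supNorm x i]

end IsNearScaled

lemma exists_finset_isNearScaled (x : Fin d → ℕ) (m : ℕ) {n : ℕ} (hn : 0 < n) :
    ∃ S : Finset (Fin d → ℕ), #S ≤ d * (2 * n / (m + 1) + 2) ^ (d - 1) ∧
      ∀ j, supNorm j = n → IsNearScaled j m x → j ∈ S := by
  set a : Fin d → ℕ := fun i => n * x i / (m + 1)
  set L := 2 * n / (m + 1) + 1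
  refine ⟨univ.biUnion fun l => Fintype.piFinset fun i =>
    if i = l then {n} else Icc (a i) (a i + L), ?_, ?_⟩
  · refine card_biUnion_le.trans ?_
    simp [Fintype.card_piFinset, apply_ite Finset.card, Finset.prod_ite, Finset.filter_ne',
      add_assoc, L]
  · rintro j rfl hj
    obtain ⟨l, hl⟩ := exists_eq_supNorm hn
    simp only [mem_biUnion, mem_univ, true_and, Fintype.mem_piFinset]
    refine ⟨l, fun i => ?_⟩
    split_ifs with hil
    · simp [hil, hl]
    · have hsplit :=
        Nat.add_div (a := supNorm j * x i) (b := 2 * supNorm j) (c := m + 1) (by omega)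
      have hupper : j i ≤ (supNorm j * x i + 2 * supNorm j) / (m + 1) :=
        (Nat.le_div_iff_mul_le m.succ_pos).mpr (by rw [mul_comm]; exact (hj i).2)
      rw [mem_Icc]
      refine ⟨Nat.div_le_of_le_mul (hj i).1, ?_⟩
      simp only [a, L]
      split_ifs at hsplit <;> omega

lemma norm_rpow_div_supNorm_le {E : Type*} [SeminormedAddCommGroup E] {p s : ℝ} (hp : 1 < p)
    (hs₀ : 0 ≤ s) (hs : s < p - 1) {u : (Fin d → ℕ) → E} (hu : u 0 = 0) (j : Fin d → ℕ) :
    ‖u j‖ ^ p / (supNorm j : ℝ) ^ p ≤ (d : ℝ) ^ (p - 1) * (1 - s / (p - 1))⁻¹ ^ (p - 1) *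
      ∑ m ∈ range (supNorm j), ∑ t : Fin d, ((m : ℝ) + 1) ^ s / (supNorm j : ℝ) ^ (1 + s) *
        ‖u (stairPoint j m t + Pi.single t 1) - u (stairPoint j m t)‖ ^ p := by
  set n := supNorm j
  set a : ℕ → Fin d → ℝ := fun m t =>
    ‖u (stairPoint j m t + Pi.single t 1) - u (stairPoint j m t)‖
  set K := (1 - s / (p - 1))⁻¹ ^ (p - 1)
  have hp₀ : 0 < p := by linarith
  have hsσ : s / (p - 1) < 1 := (div_lt_one (by linarith)).mpr hs
  rcases n.eq_zero_or_pos with hn | hn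
  · simp [hn, zero_rpow hp₀.ne']
  have hn₀ : (0 : ℝ) < n := by exact_mod_cast hn
  have hpath : ‖u j‖ ≤ ∑ m ∈ range n, ∑ t, a m t := by
    simpa [hu] using norm_sub_le_sum_edges u j
  have hholder := rpow_sum_range_le hp hs₀ hs n (c := fun m => ∑ t, a m t)
    fun m => sum_nonneg fun t _ => norm_nonneg _
  have hmean (m : ℕ) : (∑ t, a m t) ^ p ≤ (d : ℝ) ^ (p - 1) * ∑ t, a m t ^ p := by
    simpa using rpow_sum_le_const_mul_sum_rpow_of_nonneg univ hp.le
      (f := a m) fun t _ => norm_nonneg _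
  calc ‖u j‖ ^ p / (n : ℝ) ^ p
      ≤ K * (n : ℝ) ^ (p - 1 - s) * (∑ m ∈ range n, ((m : ℝ) + 1) ^ s * (∑ t, a m t) ^ p) /
          (n : ℝ) ^ p := by
        gcongr
        exact (rpow_le_rpow (norm_nonneg _) hpath hp₀.le).trans hholder
    _ ≤ K * (n : ℝ) ^ (p - 1 - s) * (∑ m ∈ range n, ((m : ℝ) + 1) ^ s *
          ((d : ℝ) ^ (p - 1) * ∑ t, a m t ^ p)) / (n : ℝ) ^ p := by
        have hK : 0 ≤ K := rpow_nonneg (inv_nonneg.mpr (by linarith)) _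
        gcongr with m
        exact hmean m
    _ = _ := by
        rw [show p - 1 - s = p - (1 + s) by ring, rpow_sub hn₀]
        simp only [mul_sum, sum_div]
        refine sum_congr rfl fun m _ => sum_congr rfl fun t _ => ?_
        field_simp
        rfl

noncomputable def hardyCoeff (s : ℝ) (j : Fin d → ℕ) (m : ℕ) : ℝ≥0∞ :=
  if m < supNorm j then ENNReal.ofReal (((m : ℝ) + 1) ^ s / (supNorm j : ℝ) ^ (1 + s)) else 0

noncomputable def edgeEnergy {E : Type*} [SeminormedAddCommGroup E] (u : (Fin d → ℕ) → E)
    (p : ℝ) (x : Fin d → ℕ) (t : Fin d) : ℝ≥0∞ :=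
  ENNReal.ofReal (‖u (x + Pi.single t 1) - u x‖ ^ p)

lemma ofReal_norm_rpow_div_le {E : Type*} [SeminormedAddCommGroup E] {p s : ℝ} (hp : 1 < p)
    (hs₀ : 0 ≤ s) (hs : s < p - 1) {u : (Fin d → ℕ) → E} (hu : u 0 = 0) (j : Fin d → ℕ) :
    ENNReal.ofReal (‖u j‖ ^ p / nsup j ^ p) ≤
      ENNReal.ofReal ((d : ℝ) ^ (p - 1) * (1 - s / (p - 1))⁻¹ ^ (p - 1)) *
        ∑ t : Fin d, ∑' m, hardyCoeff s j m * edgeEnergy u p (stairPoint j m t) t := by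
  have hK : 0 ≤ (d : ℝ) ^ (p - 1) * (1 - s / (p - 1))⁻¹ ^ (p - 1) :=
    mul_nonneg (by positivity)
      (rpow_nonneg (inv_nonneg.mpr (by linarith [(div_lt_one (by linarith)).mpr hs])) _)
  refine (ENNReal.ofReal_le_ofReal (norm_rpow_div_supNorm_le hp hs₀ hs hu j)).trans_eq ?_
  rw [ENNReal.ofReal_mul hK, ENNReal.ofReal_sum_of_nonneg fun m _ =>
    sum_nonneg fun t _ => by positivity]
  congr 1
  calc ∑ m ∈ range (supNorm j), ENNReal.ofReal (∑ t : Fin d, _)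
      = ∑ m ∈ range (supNorm j), ∑ t : Fin d,
          hardyCoeff s j m * edgeEnergy u p (stairPoint j m t) t := by
        refine sum_congr rfl fun m hm => ?_
        rw [ENNReal.ofReal_sum_of_nonneg fun t _ => by positivity]
        refine sum_congr rfl fun t _ => ?_
        rw [hardyCoeff, if_pos (mem_range.mp hm), edgeEnergy, ENNReal.ofReal_mul (by positivity)]
    _ = _ := by
        rw [sum_comm]
        refine sum_congr rfl fun t _ => (tsum_eq_sum fun m hm => ?_).symm
        simp [hardyCoeff, show ¬ m < supNorm j by simpa using hm]

lemma card_mul_weight_le (hd : 0 < d) (s : ℝ) {m n k : ℕ} (hmn : m + 1 ≤ n)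
    (hk : k ≤ d * (2 * n / (m + 1) + 2) ^ (d - 1)) :
    (k : ℝ) * (((m : ℝ) + 1) ^ s / (n : ℝ) ^ (1 + s)) ≤
      d * 4 ^ (d - 1) * ((m : ℝ) + 1) ^ (s + 1 - d) * (n : ℝ) ^ (-(s + 2 - d)) := by
  have hm₀ : (0 : ℝ) < (m : ℝ) + 1 := by positivity
  have hmn' : (m : ℝ) + 1 ≤ n := by exact_mod_cast hmn
  have hn₀ : (0 : ℝ) < n := hm₀.trans_le hmn'
  have hside : ((2 * n / (m + 1) + 2 : ℕ) : ℝ) ≤ 4 * n / ((m : ℝ) + 1) := by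
    have hdiv : ((2 * n / (m + 1) : ℕ) : ℝ) ≤ 2 * n / ((m : ℝ) + 1) := by
      simpa using Nat.cast_div_le (α := ℝ) (m := 2 * n) (n := m + 1)
    have htwo : (2 : ℝ) ≤ 2 * n / ((m : ℝ) + 1) := by
      rw [le_div_iff₀ hm₀]; linarith
    push_cast
    linarith [show 4 * (n : ℝ) / ((m : ℝ) + 1) = 2 * (2 * n / ((m : ℝ) + 1)) by ring]
  have hk' : (k : ℝ) ≤ d * (4 * n / ((m : ℝ) + 1)) ^ (d - 1) := by
    calc (k : ℝ) ≤ ((d * (2 * n / (m + 1) + 2) ^ (d - 1) : ℕ) : ℝ) := by exact_mod_cast hk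
      _ ≤ d * (4 * n / ((m : ℝ) + 1)) ^ (d - 1) := by push_cast; gcongr; exact_mod_cast hside
  have hd' : ((d - 1 : ℕ) : ℝ) = d - 1 := by rw [Nat.cast_pred hd]
  calc (k : ℝ) * (((m : ℝ) + 1) ^ s / (n : ℝ) ^ (1 + s))
      ≤ d * (4 * n / ((m : ℝ) + 1)) ^ (d - 1) * (((m : ℝ) + 1) ^ s / (n : ℝ) ^ (1 + s)) := by
        gcongr
    _ = d * 4 ^ (d - 1) * ((m : ℝ) + 1) ^ (s + 1 - d) * (n : ℝ) ^ (-(s + 2 - d)) := by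
        have hm_exp :
            ((m : ℝ) + 1) ^ (s + 1 - d) = ((m : ℝ) + 1) ^ s / ((m : ℝ) + 1) ^ ((d : ℝ) - 1) := by
          rw [← rpow_sub hm₀]; ring_nf
        have hn_exp : (n : ℝ) ^ (-(s + 2 - d)) = (n : ℝ) ^ ((d : ℝ) - 1) / (n : ℝ) ^ (1 + s) := by
          rw [← rpow_sub hn₀]; ring_nf
        rw [div_pow, mul_pow, ← rpow_natCast (n : ℝ), ← rpow_natCast ((m : ℝ) + 1), hd', hm_exp,
          hn_exp]
        field_simp

lemma tsum_supNorm_eq_hardyCoeff_le (hd : 0 < d) (s : ℝ) (x : Fin d → ℕ) (m n : ℕ) :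
    ∑' j, (if supNorm j = n ∧ IsNearScaled j m x then hardyCoeff s j m else 0) ≤
      if m + 1 ≤ n then
        ENNReal.ofReal (d * 4 ^ (d - 1) * ((m : ℝ) + 1) ^ (s + 1 - d) * (n : ℝ) ^ (-(s + 2 - d)))
      else 0 := by
  split_ifs with hmn
  · obtain ⟨S, hS, hmem⟩ := exists_finset_isNearScaled x m (n := n) (by omega)
    rw [tsum_eq_sum (s := S) fun j hj => if_neg fun h => hj (hmem j h.1 h.2)]
    calc ∑ j ∈ S, (if supNorm j = n ∧ IsNearScaled j m x then hardyCoeff s j m else 0)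
        ≤ #S • ENNReal.ofReal (((m : ℝ) + 1) ^ s / (n : ℝ) ^ (1 + s)) := by
          refine sum_le_card_nsmul _ _ _ fun j _ => ?_
          split_ifs with h
          · simp [hardyCoeff, h.1, show m < n by omega]
          · exact zero_le
      _ ≤ _ := by
          rw [nsmul_eq_mul, ← ENNReal.ofReal_natCast, ← ENNReal.ofReal_mul (by positivity)]
          exact ENNReal.ofReal_le_ofReal (card_mul_weight_le hd s hmn hS)
  · refine (ENNReal.tsum_eq_zero.mpr fun j => ?_).le
    simp +contextual [hardyCoeff, show ¬ m < n by omega]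

lemma tsum_hardyCoeff_isNearScaled_le (hd : 0 < d) {s r : ℝ} (hr : 1 < r) (hrs : r = s + 2 - d)
    (m : ℕ) (x : Fin d → ℕ) :
    ∑' j, (if IsNearScaled j m x then hardyCoeff s j m else 0) ≤
      ENNReal.ofReal (d * 4 ^ (d - 1) * (2 ^ r / (r - 1))) := by
  set A : ℝ := d * 4 ^ (d - 1) * ((m : ℝ) + 1) ^ (s + 1 - d)
  have hA : 0 ≤ A := by positivity
  have hfiber (j : Fin d → ℕ) : (if IsNearScaled j m x then hardyCoeff s j m else 0) =
      ∑' n, if supNorm j = n ∧ IsNearScaled j m x then hardyCoeff s j m else 0 := by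
    simp only [ite_and]
    exact (tsum_ite_eq' (supNorm j) fun _ => _).symm
  calc ∑' j, (if IsNearScaled j m x then hardyCoeff s j m else 0)
      = ∑' n, ∑' j, if supNorm j = n ∧ IsNearScaled j m x then hardyCoeff s j m else 0 := by
        rw [tsum_congr hfiber, ENNReal.tsum_comm]
    _ ≤ ∑' n : ℕ, if m + 1 ≤ n then ENNReal.ofReal (A * (n : ℝ) ^ (-r)) else 0 := by
        refine ENNReal.tsum_le_tsum fun n => ?_
        rw [hrs]
        exact tsum_supNorm_eq_hardyCoeff_le hd s x m n
    _ = ENNReal.ofReal A *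
          ∑' n : ℕ, if m + 1 ≤ n then ENNReal.ofReal ((n : ℝ) ^ (-r)) else 0 := by
        rw [← ENNReal.tsum_mul_left]
        refine tsum_congr fun n => ?_
        split_ifs
        exacts [ENNReal.ofReal_mul hA, (mul_zero _).symm]
    _ ≤ ENNReal.ofReal A * ENNReal.ofReal (2 ^ r / (r - 1) * ((m + 1 : ℕ) : ℝ) ^ (1 - r)) := by
        gcongr
        exact tsum_rpow_neg_le hr (Nat.le_add_left 1 m)
    _ = ENNReal.ofReal (d * 4 ^ (d - 1) * (2 ^ r / (r - 1))) := by
        rw [← ENNReal.ofReal_mul hA]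
        congr 1
        have hcancel : ((m : ℝ) + 1) ^ (s + 1 - d) * ((m : ℝ) + 1) ^ (1 - r) = 1 := by
          rw [← rpow_add (by positivity), hrs, show s + 1 - d + (1 - (s + 2 - d)) = 0 by ring,
            rpow_zero]
        push_cast
        linear_combination (d * 4 ^ (d - 1) * (2 ^ r / (r - 1)) : ℝ) * hcancel

lemma tsum_hardyCoeff_stairPoint_le (hd : 0 < d) {s r : ℝ} (hr : 1 < r) (hrs : r = s + 2 - d)
    (t : ℕ) (x : Fin d → ℕ) :
    ∑' a : (Fin d → ℕ) × ℕ, (if stairPoint a.1 a.2 t = x then hardyCoeff s a.1 a.2 else 0) ≤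
      ENNReal.ofReal (3 * (d * 4 ^ (d - 1) * (2 ^ r / (r - 1)))) := by
  set K := ENNReal.ofReal (d * 4 ^ (d - 1) * (2 ^ r / (r - 1)))
  set q := supNorm x
  have hlocal (j : Fin d → ℕ) (m : ℕ) :
      (if stairPoint j m t = x then hardyCoeff s j m else 0) ≤
        if q ≤ m + 1 ∧ m + 1 ≤ q + 2 then
          (if IsNearScaled j m x then hardyCoeff s j m else 0) else 0 := by
    by_cases hx : stairPoint j m t = x
    · by_cases hm : m < supNorm j
      · subst hx
        have hnear := isNearScaled_stairPoint hm t
        rw [if_pos rfl, if_pos hnear,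
          if_pos ⟨hnear.supNorm_le (by omega), hnear.le_supNorm_add_two (by omega)⟩]
      · simp [hardyCoeff, hm]
    · rw [if_neg hx]
      exact zero_le
  calc ∑' a : (Fin d → ℕ) × ℕ, (if stairPoint a.1 a.2 t = x then hardyCoeff s a.1 a.2 else 0)
      = ∑' (m : ℕ) (j : Fin d → ℕ), if stairPoint j m t = x then hardyCoeff s j m else 0 := by
        rw [ENNReal.tsum_prod', ENNReal.tsum_comm]
    _ ≤ ∑' m : ℕ, if q ≤ m + 1 ∧ m + 1 ≤ q + 2 then K else 0 := by
        refine ENNReal.tsum_le_tsum fun m => ?_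
        refine (ENNReal.tsum_le_tsum fun j => hlocal j m).trans ?_
        split_ifs
        · exact tsum_hardyCoeff_isNearScaled_le hd hr hrs m x
        · simp
    _ = ∑ m ∈ Icc (q - 1) (q + 1), if q ≤ m + 1 ∧ m + 1 ≤ q + 2 then K else 0 :=
        tsum_eq_sum fun m hm => if_neg fun h => hm (mem_Icc.mpr (by omega))
    _ ≤ #(Icc (q - 1) (q + 1)) • K := sum_le_card_nsmul _ _ _ fun m _ => by split_ifs <;> simp
    _ ≤ 3 • K := by gcongr; simp; omega
    _ = _ := by rw [ENNReal.ofReal_mul zero_le_three, nsmul_eq_mul]; norm_num [K]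

lemma nbr_add_single (x : Fin d → ℕ) (t : Fin d) : nbr (x + Pi.single t 1) x := by
  unfold nbr
  rw [sum_eq_single t (fun i _ hi => by simp [Pi.single_eq_of_ne hi]) (by simp)]
  simp

lemma tsum_edgeEnergy_le {E : Type*} [SeminormedAddCommGroup E] (u : (Fin d → ℕ) → E) (p : ℝ) :
    ∑ t : Fin d, ∑' x, edgeEnergy u p x t ≤
      ∑' (j : {j : Fin d → ℕ // j ≠ 0}) (k : {k : Fin d → ℕ // nbr j.1 k}),
        ENNReal.ofReal (‖u j.1 - u k.1‖ ^ p) := by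
  let edge :
      Fin d × (Fin d → ℕ) → Σ j : {j : Fin d → ℕ // j ≠ 0}, {k : Fin d → ℕ // nbr j.1 k} :=
    fun a => ⟨⟨a.2 + Pi.single a.1 1, fun h => by simpa using congr_fun h a.1⟩,
      ⟨a.2, nbr_add_single a.2 a.1⟩⟩
  have hedge : Function.Injective edge := by
    rintro ⟨t, x⟩ ⟨t', x'⟩ h
    obtain ⟨hj, rfl⟩ := Prod.mk.inj (congrArg (fun σ => (σ.1.1, σ.2.1)) h)
    have hsingle := add_left_cancel hj
    obtain rfl : t = t' := by
      by_contra hne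
      simpa [Pi.single_eq_of_ne hne] using congr_fun hsingle t
    rfl
  let F : (Σ j : {j : Fin d → ℕ // j ≠ 0}, {k : Fin d → ℕ // nbr j.1 k}) → ℝ≥0∞ :=
    fun σ => ENNReal.ofReal (‖u σ.1.1 - u σ.2.1‖ ^ p)
  calc ∑ t : Fin d, ∑' x, edgeEnergy u p x t = ∑' a, F (edge a) := by
        rw [ENNReal.tsum_prod', tsum_fintype]
        rfl
    _ ≤ ∑' σ, F σ := ENNReal.tsum_comp_le_tsum_of_injective hedge F
    _ = _ := ENNReal.tsum_sigma' F

lemma tsum_norm_rpow_div_nsup_le {E : Type*} [SeminormedAddCommGroup E] (hd : 0 < d)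
    {p s r : ℝ} (hds : (d : ℝ) - 1 < s) (hs : s < p - 1) (hrs : r = s + 2 - d)
    {u : (Fin d → ℕ) → E} (hu : u 0 = 0) :
    ∑' j : {j : Fin d → ℕ // j ≠ 0}, ENNReal.ofReal (‖u j.1‖ ^ p / nsup j.1 ^ p) ≤
      ENNReal.ofReal ((d : ℝ) ^ (p - 1) * (1 - s / (p - 1))⁻¹ ^ (p - 1)) *
        ENNReal.ofReal (3 * (d * 4 ^ (d - 1) * (2 ^ r / (r - 1)))) *
          ∑' (j : {j : Fin d → ℕ // j ≠ 0}) (k : {k : Fin d → ℕ // nbr j.1 k}),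
            ENNReal.ofReal (‖u j.1 - u k.1‖ ^ p) := by
  have hd₁ : (1 : ℝ) ≤ d := by exact_mod_cast hd
  set K₁ := ENNReal.ofReal ((d : ℝ) ^ (p - 1) * (1 - s / (p - 1))⁻¹ ^ (p - 1))
  calc ∑' j : {j : Fin d → ℕ // j ≠ 0}, ENNReal.ofReal (‖u j.1‖ ^ p / nsup j.1 ^ p)
      ≤ ∑' j : {j : Fin d → ℕ // j ≠ 0}, K₁ *
          ∑ t : Fin d, ∑' m, hardyCoeff s j.1 m * edgeEnergy u p (stairPoint j.1 m t) t :=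
        ENNReal.tsum_le_tsum fun j =>
          ofReal_norm_rpow_div_le (by linarith) (by linarith) hs hu j.1
    _ ≤ ∑' j, K₁ * ∑ t : Fin d, ∑' m, hardyCoeff s j m * edgeEnergy u p (stairPoint j m t) t :=
        ENNReal.tsum_comp_le_tsum_of_injective Subtype.val_injective _
    _ = K₁ * ∑ t : Fin d, ∑' a : (Fin d → ℕ) × ℕ,
          hardyCoeff s a.1 a.2 * edgeEnergy u p (stairPoint a.1 a.2 t) t := by
        simp only [ENNReal.tsum_mul_left, ENNReal.tsum_prod']
        rw [Summable.tsum_finsetSum fun _ _ => ENNReal.summable]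
    _ ≤ K₁ * ∑ t : Fin d, ENNReal.ofReal (3 * (d * 4 ^ (d - 1) * (2 ^ r / (r - 1)))) *
          ∑' x, edgeEnergy u p x t := by
        gcongr with t
        exact tsum_mul_comp_le_mul_tsum _ _ _
          (tsum_hardyCoeff_stairPoint_le hd (by linarith) hrs t)
    _ ≤ _ := by
        rw [← mul_sum, ← mul_assoc]
        gcongr
        exact tsum_edgeEnergy_le u p

end LatticePath

/-- Discrete Hardy inequality on `ℤ₊^d` for `d < p`, for functions with `u(0) = 0`. -/
theorem hardy_p_large (d : ℕ) (p : ℝ) (hd : 0 < d) (hdp : (d : ℝ) < p) :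
    ∃ c : ℝ, 0 ≤ c ∧ ∀ u : (Fin d → ℕ) → ℂ, u 0 = 0 →
      (∑' (j : {j : Fin d → ℕ // j ≠ 0}),
          ENNReal.ofReal (‖u j.1‖ ^ p / nsup j.1 ^ p))
        ≤ ENNReal.ofReal c *
            ∑' (j : {j : Fin d → ℕ // j ≠ 0})
              (k : {k : Fin d → ℕ // nbr j.1 k}),
              ENNReal.ofReal (‖u j.1 - u k.1‖ ^ p) := by
  have hd₁ : (1 : ℝ) ≤ d := by exact_mod_cast hd
  obtain ⟨s, hds, hs⟩ : ∃ s : ℝ, (d : ℝ) - 1 < s ∧ s < p - 1 :=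
    ⟨(d + p) / 2 - 1, by linarith, by linarith⟩
  have hK₁ : 0 ≤ (d : ℝ) ^ (p - 1) * (1 - s / (p - 1))⁻¹ ^ (p - 1) :=
    mul_nonneg (by positivity)
      (rpow_nonneg (inv_nonneg.mpr (by linarith [(div_lt_one (by linarith)).mpr hs])) _)
  have hK₂ : 0 ≤ 3 * (d * 4 ^ (d - 1) * (2 ^ (s + 2 - d) / (s + 2 - d - 1))) :=
    mul_nonneg zero_le_three (mul_nonneg (by positivity) (div_nonneg (by positivity) (by linarith)))
  refine ⟨_, mul_nonneg hK₁ hK₂, fun u hu => ?_⟩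
  rw [ENNReal.ofReal_mul hK₁]
  exact tsum_norm_rpow_div_nsup_le hd hds hs rfl hu
end

section
/- Let d = 1, 0 < p < 1 and ε > 0. Then there exists a constant c = c(p, ε) < ∞ such that for every function u : ℤ₊ → ℂ with u(0) = 0, one has ∑_{j ≥ 1} |u(j)|^p / j^{1+ε} ≤ c · ∑_{j ∈ ℤ₊} ∑_{k ∈ ℤ₊, |k−j|=1} |u(j) − u(k)|^p. -/
open scoped ENNReal
open Finset

/-!
Telescoping from `u 0 = 0` and the subadditivity of `t ↦ t ^ p` for `p ≤ 1` give
`|u j| ^ p ≤ ∑_{i < j} |u (i + 1) - u i| ^ p`. Bounding each partial sum by the full series, the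
left-hand side is at most `(∑_j j ^ -(1 + ε)) · ∑_i |u (i + 1) - u i| ^ p`, and the weight series
converges because `1 + ε > 1`.
-/

theorem ENNReal.rpow_sum_le_sum_rpow {ι : Type*} (s : Finset ι) (f : ι → ℝ≥0∞) {p : ℝ}
    (hp0 : 0 < p) (hp1 : p ≤ 1) : (∑ i ∈ s, f i) ^ p ≤ ∑ i ∈ s, f i ^ p :=
  s.le_sum_of_subadditive (· ^ p) (ENNReal.zero_rpow_of_pos hp0).le
    (fun a b => ENNReal.rpow_add_le_add_rpow a b hp0.le hp1) f

theorem ENNReal.ofReal_norm_rpow {E : Type*} [SeminormedAddCommGroup E] (x : E) {p : ℝ}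
    (hp : 0 ≤ p) : ENNReal.ofReal (‖x‖ ^ p) = ‖x‖ₑ ^ p := by
  rw [← ENNReal.ofReal_rpow_of_nonneg (norm_nonneg x) hp, ofReal_norm]

theorem enorm_rpow_le_sum_range_enorm_sub_rpow {E : Type*} [SeminormedAddCommGroup E]
    {u : ℕ → E} (hu : u 0 = 0) {p : ℝ} (hp0 : 0 < p) (hp1 : p ≤ 1) (n : ℕ) :
    ‖u n‖ₑ ^ p ≤ ∑ i ∈ range n, ‖u (i + 1) - u i‖ₑ ^ p := by
  have htelescope : ∑ i ∈ range n, (u (i + 1) - u i) = u n := by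
    rw [sum_range_sub, hu, sub_zero]
  calc ‖u n‖ₑ ^ p ≤ (∑ i ∈ range n, ‖u (i + 1) - u i‖ₑ) ^ p := by
        rw [← htelescope]
        gcongr
        simpa only [enorm_eq_nnnorm, ← ENNReal.ofNNReal_finsetSum, ENNReal.coe_le_coe]
          using nnnorm_sum_le _ _
    _ ≤ _ := ENNReal.rpow_sum_le_sum_rpow _ _ hp0 hp1

theorem ENNReal.tsum_mul_sum_range_le (w a : ℕ → ℝ≥0∞) :
    ∑' n, w n * ∑ i ∈ range n, a i ≤ (∑' n, w n) * ∑' i, a i := by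
  rw [← ENNReal.tsum_mul_right]
  exact ENNReal.tsum_le_tsum fun n => by gcongr; exact ENNReal.sum_le_tsum _

theorem ENNReal.tsum_succ_le_tsum_neighbours (F : ℕ → ℕ → ℝ≥0∞) :
    ∑' i, F i (i + 1) ≤ ∑' (j : ℕ) (k : {k : ℕ // ((k : ℤ) - (j : ℤ)) ^ 2 = 1}), F j k :=
  ENNReal.tsum_le_tsum fun j =>
    ENNReal.le_tsum (f := fun k : {k : ℕ // ((k : ℤ) - (j : ℤ)) ^ 2 = 1} => F j k)
      ⟨j + 1, by push_cast; ring⟩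

/-- One-dimensional discrete Hardy-type inequality on `ℤ₊ = ℕ` for `0 < p < 1`,
with weight `j^(1+ε)`, for functions with `u(0) = 0`. -/
theorem hardy_d_one_p_small (p ε : ℝ) (hp0 : 0 < p) (hp1 : p < 1) (hε : 0 < ε) :
    ∃ c : ℝ, 0 ≤ c ∧ ∀ u : ℕ → ℂ, u 0 = 0 →
      (∑' (j : {j : ℕ // j ≠ 0}),
          ENNReal.ofReal (‖u j.1‖ ^ p / (j.1 : ℝ) ^ (1 + ε)))
        ≤ ENNReal.ofReal c *
            ∑' (j : ℕ) (k : {k : ℕ // ((k : ℤ) - (j : ℤ)) ^ 2 = 1}),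
              ENNReal.ofReal (‖u j - u k.1‖ ^ p) := by
  set w : ℕ → ℝ := fun n => ((n : ℝ) ^ (1 + ε))⁻¹
  have hw : Summable w := Real.summable_nat_rpow_inv.mpr (by linarith)
  refine ⟨∑' n, w n, tsum_nonneg fun n => by positivity, fun u hu => ?_⟩
  simp only [ENNReal.ofReal_norm_rpow _ hp0.le]
  calc ∑' j : {j : ℕ // j ≠ 0}, ENNReal.ofReal (‖u j.1‖ ^ p / (j.1 : ℝ) ^ (1 + ε))
      = ∑' j : {j : ℕ // j ≠ 0}, ENNReal.ofReal (w j) * ‖u j.1‖ₑ ^ p := by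
        refine tsum_congr fun j => ?_
        rw [div_eq_mul_inv, mul_comm, ENNReal.ofReal_mul (by positivity),
          ENNReal.ofReal_norm_rpow _ hp0.le]
    _ ≤ ∑' n, ENNReal.ofReal (w n) * ‖u n‖ₑ ^ p :=
        ENNReal.tsum_comp_le_tsum_of_injective Subtype.val_injective _
    _ ≤ ∑' n, ENNReal.ofReal (w n) * ∑ i ∈ range n, ‖u (i + 1) - u i‖ₑ ^ p := by
        gcongr with n
        exact enorm_rpow_le_sum_range_enorm_sub_rpow hu hp0 hp1.le n
    _ ≤ ENNReal.ofReal (∑' n, w n) * ∑' i, ‖u i - u (i + 1)‖ₑ ^ p := by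
        rw [ENNReal.ofReal_tsum_of_nonneg (fun n => by positivity) hw]
        simpa only [enorm_sub_rev] using ENNReal.tsum_mul_sum_range_le _ _
    _ ≤ _ :=
        mul_le_mul_right (ENNReal.tsum_succ_le_tsum_neighbours fun j k => ‖u j - u k‖ₑ ^ p) _
end

section
/- Let 1 < p < d, let t > 0 and C < ∞, and suppose that the inequality ∑_{j ∈ ℤ₊^d \ {0}} |u(j)|^p / ‖j‖_∞^t ≤ C · ∑_{j ∈ ℤ₊^d \ {0}} ∑_{k ∈ ℤ₊^d \ {0}, k ∼ j} |u(j) − u(k)|^p holds for all functions u : ℤ₊^d → ℂ for which the left-hand side is finite. Then t ≥ p. (In other words, the exponent p on ‖j‖_∞ in the Hardy inequality for 1 ≤ p < d cannot be replaced by any smaller exponent.) -/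
open scoped ENNReal

/-!
Suppose `t < p` and put `α = (t - d) / p < 0`. Test the inequality on the finitely supported radial
functions `u_N(j) = max (‖j‖_∞ ^ α - N ^ α / 2) 0`. The shell `‖j‖_∞ = m` has
`(m + 1) ^ d - m ^ d ≍ m ^ (d - 1)` points and `u_N ≥ m ^ α / 2` on it for `m ≤ N`; since
`m ^ (d - 1) * m ^ (α p - t) = 1 / m`, the left side is at least `2 ^ (-p)` times the harmonic sum
up to `N`. Across an edge leaving the shell `m`, `u_N` changes by `O(m ^ (α - 1))` uniformly in `N`
(mean value theorem; the truncation is `1`-Lipschitz), so the right side is bounded by a multiple of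
`∑ m ^ (d - 1 + (α - 1) p) = ∑ m ^ (t - p - 1) < ∞`.
-/

open Finset Filter

theorem Real.rpow_sub_rpow_le_of_nonpos {α a b : ℝ} (hα : α ≤ 0) (ha : 0 < a) (hab : a ≤ b) :
    a ^ α - b ^ α ≤ -α * a ^ (α - 1) * (b - a) := by
  rcases hab.eq_or_lt with rfl | hab
  · simp
  obtain ⟨c, hc, hslope⟩ := exists_hasDerivAt_eq_slope (fun x => x ^ α)
    (fun x => α * x ^ (α - 1)) hab
    (fun x hx => (Real.continuousAt_rpow_const x α
      (Or.inl (ha.trans_le hx.1).ne')).continuousWithinAt)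
    (fun x hx => Real.hasDerivAt_rpow_const (Or.inl (ha.trans hx.1).ne'))
  rw [eq_div_iff (sub_ne_zero.2 hab.ne')] at hslope
  have hca : c ^ (α - 1) ≤ a ^ (α - 1) := Real.rpow_le_rpow_of_nonpos ha hc.1.le (by linarith)
  calc a ^ α - b ^ α = -α * c ^ (α - 1) * (b - a) := by linarith
    _ ≤ -α * a ^ (α - 1) * (b - a) :=
      mul_le_mul_of_nonneg_right (mul_le_mul_of_nonneg_left hca (neg_nonneg.2 hα))
        (sub_nonneg.2 hab.le)

theorem Real.abs_rpow_sub_rpow_le_of_nonpos {α a b : ℝ} (hα : α ≤ 0) (ha : 0 < a) (hb : 0 < b) :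
    |a ^ α - b ^ α| ≤ -α * min a b ^ (α - 1) * |a - b| := by
  wlog hab : a ≤ b generalizing a b
  · rw [abs_sub_comm, min_comm, abs_sub_comm a]
    exact this hb ha (le_of_not_ge hab)
  rw [min_eq_left hab, abs_of_nonneg (sub_nonneg.2 (Real.rpow_le_rpow_of_nonpos ha hab hα)),
    abs_sub_comm, abs_of_nonneg (sub_nonneg.2 hab)]
  exact Real.rpow_sub_rpow_le_of_nonpos hα ha hab

theorem Real.abs_rpow_sub_rpow_le_of_le_two_mul {α a b : ℝ} (hα : α ≤ 0) (ha : 0 < a)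
    (hb : 0 < b) (hab : a ≤ 2 * b) (h1 : |a - b| ≤ 1) :
    |a ^ α - b ^ α| ≤ -α * 2 ^ (1 - α) * a ^ (α - 1) := by
  have hmin : (a / 2) ^ (α - 1) ≥ min a b ^ (α - 1) :=
    Real.rpow_le_rpow_of_nonpos (by positivity) (le_min (by linarith) (by linarith)) (by linarith)
  have hhalf : (a / 2) ^ (α - 1) = 2 ^ (1 - α) * a ^ (α - 1) := by
    rw [Real.div_rpow ha.le zero_le_two, div_eq_mul_inv, ← Real.rpow_neg zero_le_two, neg_sub,
      mul_comm]
  calc |a ^ α - b ^ α| ≤ -α * min a b ^ (α - 1) * |a - b| :=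
        Real.abs_rpow_sub_rpow_le_of_nonpos hα ha hb
    _ ≤ -α * (a / 2) ^ (α - 1) * 1 := by
        have hα_neg := neg_nonneg.2 hα
        gcongr
    _ = -α * 2 ^ (1 - α) * a ^ (α - 1) := by rw [hhalf]; ring

noncomputable def cutoffPow (α c : ℝ) (n : ℕ) : ℝ := max ((n : ℝ) ^ α - c) 0

theorem cutoffPow_zero {α c : ℝ} (hα : α ≠ 0) (hc : 0 ≤ c) : cutoffPow α c 0 = 0 := by
  simp [cutoffPow, Real.zero_rpow hα, hc]

theorem half_rpow_le_cutoffPow {α c : ℝ} {n : ℕ} (h : 2 * c ≤ (n : ℝ) ^ α) :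
    (n : ℝ) ^ α / 2 ≤ cutoffPow α c n :=
  le_max_of_le_left (by linarith)

theorem cutoffPow_eventually_eq_zero {α c : ℝ} (hα : α < 0) (hc : 0 < c) :
    ∀ᶠ n in atTop, cutoffPow α c n = 0 := by
  have hlim : Tendsto (fun x : ℝ => x ^ α) atTop (nhds 0) := by
    simpa using tendsto_rpow_neg_atTop (neg_pos.2 hα)
  filter_upwards [(hlim.comp tendsto_natCast_atTop_atTop).eventually (ge_mem_nhds hc)] with n hn
  exact max_eq_right (sub_nonpos.2 hn)

theorem abs_cutoffPow_sub_le {α : ℝ} (hα : α ≤ 0) (c : ℝ) {a b : ℕ} (ha : 0 < a) (hb : 0 < b)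
    (hab : a ≤ b + 1) (hba : b ≤ a + 1) :
    |cutoffPow α c a - cutoffPow α c b| ≤ -α * 2 ^ (1 - α) * (a : ℝ) ^ (α - 1) := by
  refine (abs_max_sub_max_le_abs _ _ _).trans ?_
  rw [sub_sub_sub_cancel_right]
  have hab' : (a : ℝ) ≤ b + 1 := by exact_mod_cast hab
  have hba' : (b : ℝ) ≤ a + 1 := by exact_mod_cast hba
  have hb1 : (1 : ℝ) ≤ b := by exact_mod_cast hb
  exact Real.abs_rpow_sub_rpow_le_of_le_two_mul hα (by exact_mod_cast ha) (by exact_mod_cast hb)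
    (by linarith) (abs_le.2 ⟨by linarith, by linarith⟩)

section Lattice

variable {d : ℕ}

theorem univ_sup_eq_zero_iff {x : Fin d → ℕ} : univ.sup x = 0 ↔ x = 0 := by
  rw [← Nat.bot_eq_zero, Finset.sup_eq_bot_iff, funext_iff]; simp

theorem nbr.symm {x y : Fin d → ℕ} (h : nbr x y) : nbr y x := by
  unfold nbr at *
  simpa only [← neg_sub (y _ : ℤ), neg_sq] using h

theorem nbr.abs_sub_le_one {x y : Fin d → ℕ} (h : nbr x y) (i : Fin d) :
    |(x i : ℤ) - y i| ≤ 1 :=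
  (sq_le_one_iff_abs_le_one _).1 <|
    h ▸ Finset.single_le_sum (fun j _ => sq_nonneg ((x j : ℤ) - y j)) (mem_univ i)

theorem nbr.sup_le_sup_add_one {x y : Fin d → ℕ} (h : nbr x y) :
    univ.sup y ≤ univ.sup x + 1 :=
  Finset.sup_le fun i _ => by
    have hxi := Finset.le_sup (f := x) (mem_univ i)
    have hi := (abs_le.1 (h.abs_sub_le_one i)).1
    omega

theorem encard_setOf_nbr_le (x : Fin d → ℕ) : {y | nbr x y}.encard ≤ 3 ^ d := by
  let box := Fintype.piFinset fun i => Icc (x i - 1) (x i + 1)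
  have hsub : {y | nbr x y} ⊆ box := fun y hy => by
    simp only [box, mem_coe, Fintype.mem_piFinset, mem_Icc]
    intro i
    have hi := abs_le.1 (hy.abs_sub_le_one i)
    omega
  have hcard : box.card ≤ 3 ^ d := by
    simpa [box, Fintype.card_piFinset] using
      Finset.prod_le_pow_card univ (fun i => (Icc (x i - 1) (x i + 1)).card) 3
        fun i _ => by simp only [Nat.card_Icc]; omega
  calc {y | nbr x y}.encard ≤ (box : Set (Fin d → ℕ)).encard := Set.encard_le_encard hsub
    _ ≤ 3 ^ d := by rw [Set.encard_coe_eq_coe_finsetCard]; exact_mod_cast hcard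

theorem encard_setOf_sup_eq {m : ℕ} (hm : m ≠ 0) :
    {j : Fin d → ℕ | univ.sup j = m}.encard = ((m + 1) ^ d - m ^ d : ℕ) := by
  have hset : {j : Fin d → ℕ | univ.sup j = m} =
      ↑(Fintype.piFinset (fun _ : Fin d => range (m + 1)) \
        Fintype.piFinset (fun _ : Fin d => range m)) := by
    ext j
    have hle : univ.sup j ≤ m ↔ ∀ i, j i < m + 1 := by simp
    have hlt : univ.sup j < m ↔ ∀ i, j i < m := by
      simp [Finset.sup_lt_iff (Nat.pos_of_ne_zero hm)]
    simp only [Set.mem_ofPred_eq, coe_sdiff, Set.mem_sdiff, mem_coe, Fintype.mem_piFinset,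
      mem_range, ← hle, ← hlt]
    omega
  rw [hset, Set.encard_coe_eq_coe_finsetCard, card_sdiff_of_subset, Fintype.card_piFinset,
    Fintype.card_piFinset]
  · simp
  · exact Fintype.piFinset_subset _ _ fun _ => range_subset_range.2 (Nat.le_succ m)

end Lattice

theorem ENNReal.tsum_comp_eq_tsum_encard_mul {β γ : Type*} (g : β → γ) (φ : γ → ℝ≥0∞) :
    ∑' b, φ (g b) = ∑' c, (g ⁻¹' {c}).encard * φ c := by
  rw [← ENNReal.tsum_fiberwise _ g]
  refine tsum_congr fun c => ?_
  rw [← ENNReal.tsum_set_const]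
  exact tsum_congr fun b => by rw [show g b = c from b.2]

section ShellCount

variable {d : ℕ}

theorem rpow_le_succ_pow_sub_pow (hd : 1 ≤ d) (m : ℕ) :
    (m : ℝ) ^ ((d : ℝ) - 1) ≤ (((m + 1) ^ d - m ^ d : ℕ) : ℝ) := by
  obtain ⟨e, rfl⟩ := Nat.exists_eq_add_of_le' hd
  have hshell : m ^ e + m ^ (e + 1) ≤ (m + 1) ^ (e + 1) :=
    calc m ^ e + m ^ (e + 1) = (m + 1) * m ^ e := by ring
      _ ≤ (m + 1) * (m + 1) ^ e := Nat.mul_le_mul_left _ (Nat.pow_le_pow_left (by omega) e)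
      _ = (m + 1) ^ (e + 1) := by ring
  rw [Nat.cast_add_one, add_sub_cancel_right, Real.rpow_natCast]
  exact_mod_cast Nat.le_sub_of_add_le hshell

theorem succ_pow_sub_pow_le {d : ℕ} (hd : 1 ≤ d) {m : ℕ} (hm : 1 ≤ m) :
    (((m + 1) ^ d - m ^ d : ℕ) : ℝ) ≤ d * 2 ^ (d - 1) * (m : ℝ) ^ ((d : ℝ) - 1) := by
  obtain ⟨e, rfl⟩ := Nat.exists_eq_add_of_le' hd
  have hm' : (1 : ℝ) ≤ m := by exact_mod_cast hm
  rw [Nat.cast_sub (Nat.pow_le_pow_left (Nat.le_succ m) _), Nat.cast_add_one, add_sub_cancel_right,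
    Real.rpow_natCast, Nat.add_sub_cancel]
  push_cast
  calc ((m : ℝ) + 1) ^ (e + 1) - (m : ℝ) ^ (e + 1)
      ≤ |(m : ℝ) + 1 - m| * ↑(e + 1) * max |(m : ℝ) + 1| |(m : ℝ)| ^ (e + 1 - 1) :=
        (le_abs_self _).trans (abs_pow_sub_pow_le _ _ _)
    _ = ((e : ℝ) + 1) * ((m : ℝ) + 1) ^ e := by
        rw [abs_of_nonneg (by linarith : (0 : ℝ) ≤ m),
          abs_of_nonneg (by linarith : (0 : ℝ) ≤ m + 1), max_eq_left (by linarith)]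
        simp
    _ ≤ ((e : ℝ) + 1) * (2 * m) ^ e := by gcongr; linarith
    _ = ((e : ℝ) + 1) * 2 ^ e * m ^ e := by ring

end ShellCount

section RadialSums

variable {d : ℕ}

theorem tsum_ne_zero_comp_sup (φ : ℕ → ℝ≥0∞) (hφ : φ 0 = 0) :
    ∑' j : {j : Fin d → ℕ // j ≠ 0}, φ (univ.sup j.1) =
      ∑' m, (((m + 1) ^ d - m ^ d : ℕ) : ℝ≥0∞) * φ m := by
  have hsupp : Function.support (fun j : Fin d → ℕ => φ (univ.sup j)) ⊆ {j | j ≠ 0} := by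
    rintro j hj rfl
    exact hj (by simp only [univ_sup_eq_zero_iff.2 rfl, hφ])
  calc ∑' j : {j : Fin d → ℕ // j ≠ 0}, φ (univ.sup j.1)
      = ∑' j : Fin d → ℕ, φ (univ.sup j) := tsum_subtype_eq_of_support_subset hsupp
    _ = ∑' m, ((fun j : Fin d → ℕ => univ.sup j) ⁻¹' {m}).encard * φ m :=
      ENNReal.tsum_comp_eq_tsum_encard_mul _ _
    _ = ∑' m, (((m + 1) ^ d - m ^ d : ℕ) : ℝ≥0∞) * φ m := by
      refine tsum_congr fun m => ?_
      rcases eq_or_ne m 0 with rfl | hm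
      · simp [hφ]
      · rw [show (fun j : Fin d → ℕ => univ.sup j) ⁻¹' {m} = {j | univ.sup j = m} from rfl,
          encard_setOf_sup_eq hm]
        simp

noncomputable def radial (f : ℕ → ℝ) : (Fin d → ℕ) → ℂ := fun j => (f (univ.sup j) : ℂ)

noncomputable def weightedPowerSum (p t : ℝ) (u : (Fin d → ℕ) → ℂ) : ℝ≥0∞ :=
  ∑' j : {j : Fin d → ℕ // j ≠ 0}, ENNReal.ofReal (‖u j.1‖ ^ p / nsup j.1 ^ t)

noncomputable def dirichletEnergy (p : ℝ) (u : (Fin d → ℕ) → ℂ) : ℝ≥0∞ :=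
  ∑' (j : {j : Fin d → ℕ // j ≠ 0}) (k : {k : Fin d → ℕ // k ≠ 0 ∧ nbr j.1 k}),
    ENNReal.ofReal (‖u j.1 - u k.1‖ ^ p)

theorem weightedPowerSum_radial {p : ℝ} (t : ℝ) (hp : p ≠ 0) {f : ℕ → ℝ} (hf : f 0 = 0) :
    weightedPowerSum p t (radial (d := d) f) =
      ∑' m, (((m + 1) ^ d - m ^ d : ℕ) : ℝ≥0∞) * ENNReal.ofReal (|f m| ^ p / (m : ℝ) ^ t) := by
  rw [← tsum_ne_zero_comp_sup _ (by simp [hf, Real.zero_rpow hp])]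
  simp [weightedPowerSum, radial, nsup]

theorem dirichletEnergy_radial_le {p : ℝ} (hp : 0 ≤ p) {f D : ℕ → ℝ}
    (hD : ∀ a b : ℕ, 0 < a → 0 < b → a ≤ b + 1 → b ≤ a + 1 → |f a - f b| ≤ D a) :
    dirichletEnergy p (radial (d := d) f) ≤
      ∑' j : {j : Fin d → ℕ // j ≠ 0}, ENNReal.ofReal (3 ^ d * D (univ.sup j.1) ^ p) := by
  refine ENNReal.tsum_le_tsum fun j => ?_
  have hsup_pos {x : Fin d → ℕ} (hx : x ≠ 0) : 0 < univ.sup x :=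
    Nat.pos_of_ne_zero (univ_sup_eq_zero_iff.not.2 hx)
  calc ∑' k : {k : Fin d → ℕ // k ≠ 0 ∧ nbr j.1 k},
        ENNReal.ofReal (‖radial f j.1 - radial f k.1‖ ^ p)
      ≤ ∑' k : {k : Fin d → ℕ // k ≠ 0 ∧ nbr j.1 k}, ENNReal.ofReal (D (univ.sup j.1) ^ p) := by
        refine ENNReal.tsum_le_tsum fun k => ENNReal.ofReal_le_ofReal ?_
        rw [radial, radial, ← Complex.ofReal_sub, Complex.norm_real, Real.norm_eq_abs]
        exact Real.rpow_le_rpow (abs_nonneg _) (hD _ _ (hsup_pos j.2) (hsup_pos k.2.1)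
          k.2.2.symm.sup_le_sup_add_one k.2.2.sup_le_sup_add_one) hp
    _ ≤ ENNReal.ofReal (3 ^ d * D (univ.sup j.1) ^ p) := by
        have hcard : ENat.card {k : Fin d → ℕ // k ≠ 0 ∧ nbr j.1 k} ≤ 3 ^ d :=
          (ENat.card_coe_set_eq {k | k ≠ 0 ∧ nbr j.1 k}).trans_le
            ((Set.encard_le_encard fun k hk => hk.2).trans (encard_setOf_nbr_le j.1))
        rw [ENNReal.tsum_const, ENNReal.ofReal_mul (by positivity),
          ENNReal.ofReal_pow zero_le_three, ENNReal.ofReal_ofNat]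
        gcongr
        simpa using ENat.toENNReal_le.2 hcard

end RadialSums

section CutoffPowSums

variable {d : ℕ} {p t α : ℝ}

theorem weightedPowerSum_cutoffPow_ne_top (hp : 0 < p) (hα : α < 0) {c : ℝ} (hc : 0 < c) :
    weightedPowerSum p t (radial (d := d) (cutoffPow α c)) ≠ ⊤ := by
  rw [weightedPowerSum_radial t hp.ne' (cutoffPow_zero hα.ne hc.le)]
  obtain ⟨M, hM⟩ := eventually_atTop.1 (cutoffPow_eventually_eq_zero hα hc)
  rw [tsum_eq_sum (s := range M) fun m hm => by
    simp [hM m (by simpa using hm), Real.zero_rpow hp.ne']]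
  exact ENNReal.sum_ne_top.2 fun m _ =>
    ENNReal.mul_ne_top (ENNReal.natCast_ne_top _) ENNReal.ofReal_ne_top

theorem harmonic_le_weightedPowerSum_cutoffPow (hd : 1 ≤ d) (hp : 0 < p) (hα : α < 0)
    (hαp : α * p = t - d) (N : ℕ) :
    ENNReal.ofReal (2 ^ (-p) * ∑ i ∈ range N, 1 / ((i : ℝ) + 1)) ≤
      weightedPowerSum p t (radial (d := d) (cutoffPow α ((N : ℝ) ^ α / 2))) := by
  set f := cutoffPow α ((N : ℝ) ^ α / 2)
  have hterm : ∀ m : ℕ, 0 < m → m ≤ N →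
      2 ^ (-p) * (1 / (m : ℝ)) ≤ ((m + 1) ^ d - m ^ d : ℕ) * (|f m| ^ p / (m : ℝ) ^ t) := by
    intro m hm hmN
    have hm0 : (0 : ℝ) < m := by exact_mod_cast hm
    have hf : (m : ℝ) ^ α / 2 ≤ |f m| :=
      (half_rpow_le_cutoffPow (by
        rw [mul_div_cancel₀ _ two_ne_zero]
        exact Real.rpow_le_rpow_of_nonpos hm0 (by exact_mod_cast hmN) hα.le)).trans (le_abs_self _)
    have hpow : ((m : ℝ) ^ α / 2) ^ p = 2 ^ (-p) * (m : ℝ) ^ (t - d) := by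
      rw [Real.div_rpow (by positivity) zero_le_two, ← Real.rpow_mul hm0.le, hαp,
        Real.rpow_neg zero_le_two]
      ring
    have hexp : (m : ℝ) ^ ((d : ℝ) - 1) * (m : ℝ) ^ (t - d) / (m : ℝ) ^ t = 1 / m := by
      rw [← Real.rpow_add hm0, ← Real.rpow_sub hm0, show (d : ℝ) - 1 + (t - d) - t = -1 by ring,
        Real.rpow_neg_one, one_div]
    calc 2 ^ (-p) * (1 / (m : ℝ))
        = (m : ℝ) ^ ((d : ℝ) - 1) * (((m : ℝ) ^ α / 2) ^ p / (m : ℝ) ^ t) := by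
          rw [← hexp, hpow]; ring
      _ ≤ ((m + 1) ^ d - m ^ d : ℕ) * (|f m| ^ p / (m : ℝ) ^ t) := by
          gcongr
          exact rpow_le_succ_pow_sub_pow hd m
  rw [weightedPowerSum_radial t hp.ne' (cutoffPow_zero hα.ne (by positivity))]
  calc ENNReal.ofReal (2 ^ (-p) * ∑ i ∈ range N, 1 / ((i : ℝ) + 1))
      = ∑ i ∈ range N, ENNReal.ofReal (2 ^ (-p) * (1 / ((i + 1 : ℕ) : ℝ))) := by
        rw [mul_sum, ENNReal.ofReal_sum_of_nonneg fun i _ => by positivity]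
        simp only [Nat.cast_add_one]
    _ ≤ ∑ i ∈ range N, (((i + 1 + 1) ^ d - (i + 1) ^ d : ℕ) : ℝ≥0∞) *
          ENNReal.ofReal (|f (i + 1)| ^ p / ((i + 1 : ℕ) : ℝ) ^ t) := by
        refine sum_le_sum fun i hi => ?_
        rw [← ENNReal.ofReal_natCast, ← ENNReal.ofReal_mul (Nat.cast_nonneg _)]
        exact ENNReal.ofReal_le_ofReal (hterm _ i.succ_pos (mem_range.1 hi))
    _ ≤ ∑' m, (((m + 1) ^ d - m ^ d : ℕ) : ℝ≥0∞) *
          ENNReal.ofReal (|f m| ^ p / (m : ℝ) ^ t) :=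
        (ENNReal.sum_le_tsum _).trans (ENNReal.tsum_comp_le_tsum_of_injective (add_left_injective 1)
          fun m => (((m + 1) ^ d - m ^ d : ℕ) : ℝ≥0∞) * ENNReal.ofReal (|f m| ^ p / (m : ℝ) ^ t))

theorem dirichletEnergy_cutoffPow_le (hp : 0 < p) (hα : α ≤ 0) (c : ℝ) :
    dirichletEnergy p (radial (d := d) (cutoffPow α c)) ≤
      ∑' m, (((m + 1) ^ d - m ^ d : ℕ) : ℝ≥0∞) *
        ENNReal.ofReal (3 ^ d * (-α * 2 ^ (1 - α)) ^ p * (m : ℝ) ^ ((α - 1) * p)) := by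
  have hαneg : -α * 2 ^ (1 - α) ≥ 0 := mul_nonneg (neg_nonneg.2 hα) (by positivity)
  calc dirichletEnergy p (radial (d := d) (cutoffPow α c))
      ≤ ∑' j : {j : Fin d → ℕ // j ≠ 0},
          ENNReal.ofReal (3 ^ d * (-α * 2 ^ (1 - α) * ((univ.sup j.1 : ℕ) : ℝ) ^ (α - 1)) ^ p) :=
        dirichletEnergy_radial_le hp.le fun a b ha hb hab hba =>
          abs_cutoffPow_sub_le hα c ha hb hab hba
    _ = ∑' j : {j : Fin d → ℕ // j ≠ 0},
          ENNReal.ofReal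
            (3 ^ d * (-α * 2 ^ (1 - α)) ^ p * ((univ.sup j.1 : ℕ) : ℝ) ^ ((α - 1) * p)) := by
        refine tsum_congr fun j => ?_
        rw [Real.mul_rpow hαneg (by positivity), ← Real.rpow_mul (by positivity), mul_assoc]
    _ = _ := tsum_ne_zero_comp_sup
        (fun m => ENNReal.ofReal (3 ^ d * (-α * 2 ^ (1 - α)) ^ p * (m : ℝ) ^ ((α - 1) * p)))
        (by simp [Real.zero_rpow (mul_ne_zero (by linarith : α - 1 ≠ 0) hp.ne')])

theorem tsum_succ_pow_sub_pow_mul_rpow_ne_top (hd : 1 ≤ d) (K : ℝ) {β : ℝ} (hβ : d + β < 0) :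
    ∑' m : ℕ, (((m + 1) ^ d - m ^ d : ℕ) : ℝ≥0∞) * ENNReal.ofReal (K * (m : ℝ) ^ β) ≠ ⊤ := by
  have hsum : Summable fun m : ℕ => d * 2 ^ (d - 1) * |K| * (m : ℝ) ^ ((d : ℝ) - 1 + β) :=
    (Real.summable_nat_rpow.2 (by linarith)).mul_left _
  refine ne_top_of_le_ne_top (ENNReal.ofReal_tsum_of_nonneg (fun m => by positivity) hsum ▸
    ENNReal.ofReal_ne_top) (ENNReal.tsum_le_tsum fun m => ?_)
  rcases Nat.eq_zero_or_pos m with rfl | hm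
  · simp [Real.zero_rpow (by linarith : β ≠ 0)]
  have hm0 : (0 : ℝ) < m := by exact_mod_cast hm
  rw [← ENNReal.ofReal_natCast, ← ENNReal.ofReal_mul (Nat.cast_nonneg _)]
  refine ENNReal.ofReal_le_ofReal ?_
  calc (((m + 1) ^ d - m ^ d : ℕ) : ℝ) * (K * (m : ℝ) ^ β)
      ≤ (((m + 1) ^ d - m ^ d : ℕ) : ℝ) * (|K| * (m : ℝ) ^ β) := by
        gcongr
        exact le_abs_self K
    _ ≤ (d * 2 ^ (d - 1) * (m : ℝ) ^ ((d : ℝ) - 1)) * (|K| * (m : ℝ) ^ β) := by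
        gcongr
        exact succ_pow_sub_pow_le hd hm
    _ = d * 2 ^ (d - 1) * |K| * (m : ℝ) ^ ((d : ℝ) - 1 + β) := by
        rw [Real.rpow_add hm0]; ring

end CutoffPowSums

theorem hardy_exponent_optimal_p_medium_general (d : ℕ) (p t C : ℝ)
    (hp : 1 < p) (hpd : p < d)
    (H : ∀ u : (Fin d → ℕ) → ℂ,
      (∑' (j : {j : Fin d → ℕ // j ≠ 0}),
          ENNReal.ofReal (‖u j.1‖ ^ p / nsup j.1 ^ t)) ≠ ⊤ →
      (∑' (j : {j : Fin d → ℕ // j ≠ 0}),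
          ENNReal.ofReal (‖u j.1‖ ^ p / nsup j.1 ^ t))
        ≤ ENNReal.ofReal C *
            ∑' (j : {j : Fin d → ℕ // j ≠ 0})
              (k : {k : Fin d → ℕ // k ≠ 0 ∧ nbr j.1 k}),
              ENNReal.ofReal (‖u j.1 - u k.1‖ ^ p)) :
    p ≤ t := by
  by_contra! htp
  have hp0 : 0 < p := by linarith
  have hd : 1 ≤ d := by exact_mod_cast (hp.trans hpd).le
  set α := (t - d) / p
  have hαp : α * p = t - d := div_mul_cancel₀ _ hp0.ne'
  have hα : α < 0 := div_neg_of_neg_of_pos (by linarith) hp0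
  set B := ∑' m, (((m + 1) ^ d - m ^ d : ℕ) : ℝ≥0∞) *
    ENNReal.ofReal (3 ^ d * (-α * 2 ^ (1 - α)) ^ p * (m : ℝ) ^ ((α - 1) * p))
  have hB : ENNReal.ofReal C * B ≠ ⊤ := ENNReal.mul_ne_top ENNReal.ofReal_ne_top
    (tsum_succ_pow_sub_pow_mul_rpow_ne_top hd _ (by nlinarith))
  have hbound (N : ℕ) (hN : 0 < N) :
      2 ^ (-p) * ∑ i ∈ range N, 1 / ((i : ℝ) + 1) ≤ (ENNReal.ofReal C * B).toReal := by
    have hc : 0 < (N : ℝ) ^ α / 2 := by positivity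
    rw [← ENNReal.ofReal_le_iff_le_toReal hB]
    calc _ ≤ weightedPowerSum p t (radial (d := d) (cutoffPow α ((N : ℝ) ^ α / 2))) :=
          harmonic_le_weightedPowerSum_cutoffPow hd hp0 hα hαp N
      _ ≤ ENNReal.ofReal C * dirichletEnergy p (radial (d := d) (cutoffPow α ((N : ℝ) ^ α / 2))) :=
          H _ (weightedPowerSum_cutoffPow_ne_top hp0 hα hc)
      _ ≤ ENNReal.ofReal C * B := by gcongr; exact dirichletEnergy_cutoffPow_le hp0 hα.le _
  obtain ⟨N, hN, hN0⟩ := ((Real.tendsto_sum_range_one_div_nat_succ_atTop.const_mul_atTop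
    (by positivity : (0 : ℝ) < 2 ^ (-p))).eventually_gt_atTop _ |>.and
      (eventually_gt_atTop 0)).exists
  exact (hbound N hN0).not_gt hN

/-- Optimality of the exponent `p` in the Hardy inequality on `ℤ₊^d` for `1 < p < d`:
if the inequality with weight `‖j‖_∞^t` holds for all admissible `u`, then `t ≥ p`. -/
theorem hardy_exponent_optimal_p_medium (d : ℕ) (p t C : ℝ)
    (hp : 1 < p) (hpd : p < d) (ht : 0 < t)
    (H : ∀ u : (Fin d → ℕ) → ℂ,
      (∑' (j : {j : Fin d → ℕ // j ≠ 0}),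
          ENNReal.ofReal (‖u j.1‖ ^ p / nsup j.1 ^ t)) ≠ ⊤ →
      (∑' (j : {j : Fin d → ℕ // j ≠ 0}),
          ENNReal.ofReal (‖u j.1‖ ^ p / nsup j.1 ^ t))
        ≤ ENNReal.ofReal C *
            ∑' (j : {j : Fin d → ℕ // j ≠ 0})
              (k : {k : Fin d → ℕ // k ≠ 0 ∧ nbr j.1 k}),
              ENNReal.ofReal (‖u j.1 - u k.1‖ ^ p)) :
    p ≤ t :=
  hardy_exponent_optimal_p_medium_general d p t C hp hpd H
end

section
/- Let 0 < p ≤ 1 < d, let t > 0 and C < ∞, and suppose that the inequality ∑_{j ∈ ℤ₊^d \ {0}} |u(j)|^p / ‖j‖_∞^t ≤ C · ∑_{j ∈ ℤ₊^d \ {0}} ∑_{k ∈ ℤ₊^d \ {0}, k ∼ j} |u(j) − u(k)|^p holds for all functions u : ℤ₊^d → ℂ for which the left-hand side is finite. Then t ≥ 1. (In other words, the exponent 1 on ‖j‖_∞ in the Hardy inequality for 0 < p ≤ 1 < d cannot be replaced by any smaller exponent.) -/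
/-!
Test the inequality on the indicator `u` of the cube `{0, …, n}^d`. Every nonzero point of the
cube has weight at least `n^(-t)`, so the left side is at least `n^d · n^(-t)`. A difference
`u j - u k` between neighbours is nonzero only when `j` lies in the shell
`{0, …, n+1}^d \ {0, …, n-1}^d`, which has `(n+2)^d - n^d = O(n^(d-1))` points, each with at most
`3^d` neighbours; so the right side is `O(n^(d-1))`. Hence `n^(1-t)` stays bounded, forcing `t ≥ 1`.
-/

open scoped ENNReal

open Finset

section Counting

variable {α : Type*} {P : α → Prop}

theorem ENNReal.tsum_subtype_le_card_mul (s : Finset α) (f : {x // P x} → ℝ≥0∞) (c : ℝ≥0∞)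
    (hs : ∀ x, x.1 ∉ s → f x = 0) (hc : ∀ x, f x ≤ c) : ∑' x, f x ≤ s.card * c := by
  classical
  calc ∑' x, f x ≤ ∑' x : {x // P x}, (s : Set α).indicator (fun _ => c) x.1 :=
        ENNReal.tsum_le_tsum fun x => by
          by_cases hx : x.1 ∈ s
          · simpa [hx] using hc x
          · simp [hx, hs x hx]
    _ ≤ ∑' x, (s : Set α).indicator (fun _ => c) x :=
        ENNReal.tsum_comp_le_tsum_of_injective Subtype.val_injective _
    _ = s.card * c := by rw [← sum_eq_tsum_indicator]; simp

theorem ENNReal.card_mul_le_tsum_subtype [DecidablePred P] (s : Finset α)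
    (f : {x // P x} → ℝ≥0∞) (c : ℝ≥0∞) (hc : ∀ x, x.1 ∈ s → c ≤ f x) :
    (s.filter P).card * c ≤ ∑' x, f x := by
  rw [← card_subtype]
  calc (s.subtype P).card * c = ∑ _x ∈ s.subtype P, c := by simp
    _ ≤ ∑ x ∈ s.subtype P, f x := sum_le_sum fun x hx => hc x (mem_subtype.mp hx)
    _ ≤ ∑' x, f x := ENNReal.sum_le_tsum _

end Counting

theorem rpow_one_sub_le_of_pow_div_rpow_le {n d : ℕ} {t A : ℝ} (hn : 1 ≤ n) (hd : d ≠ 0)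
    (h : (n : ℝ) ^ d / (n : ℝ) ^ t ≤ A * (n : ℝ) ^ (d - 1)) : (n : ℝ) ^ (1 - t) ≤ A := by
  have hn' : (0 : ℝ) < n := by exact_mod_cast hn
  have hsplit : (n : ℝ) ^ d / (n : ℝ) ^ t = (n : ℝ) ^ (d - 1) * (n : ℝ) ^ (1 - t) := by
    rw [Real.rpow_sub hn', Real.rpow_one, ← pow_sub_one_mul hd]
    ring
  rw [hsplit, mul_comm A] at h
  exact le_of_mul_le_mul_left h (by positivity)

section Lattice

variable {d : ℕ} {j k : Fin d → ℕ}

theorem nbr.symm_s6 (h : nbr j k) : nbr k j := by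
  unfold nbr at *
  rw [← h]
  exact sum_congr rfl fun i _ => by ring

theorem nbr.apply_le_add_one (h : nbr j k) (m : Fin d) : k m ≤ j m + 1 := by
  have hm : ((j m : ℤ) - k m) ^ 2 ≤ 1 :=
    h ▸ single_le_sum (f := fun i => ((j i : ℤ) - k i) ^ 2) (fun i _ => sq_nonneg _) (mem_univ m)
  have := abs_le.mp ((sq_le_one_iff_abs_le_one _).mp hm)
  omega

theorem nbr.mem_piFinset_Icc (h : nbr j k) :
    k ∈ Fintype.piFinset fun m => Icc (j m - 1) (j m + 1) :=
  Fintype.mem_piFinset.mpr fun m => mem_Icc.mpr ⟨by have := h.symm_s6.apply_le_add_one m; omega,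
    h.apply_le_add_one m⟩

theorem card_piFinset_Icc_le (j : Fin d → ℕ) :
    (Fintype.piFinset fun m => Icc (j m - 1) (j m + 1)).card ≤ 3 ^ d := by
  rw [Fintype.card_piFinset]
  simpa using prod_le_pow_card univ (fun m => #(Icc (j m - 1) (j m + 1))) 3 fun m _ => by
    rw [Nat.card_Icc]; omega

theorem tsum_nbr_le (j : Fin d → ℕ) (f : {k // k ≠ 0 ∧ nbr j k} → ℝ≥0∞) (hf : ∀ k, f k ≤ 1) :
    ∑' k, f k ≤ 3 ^ d :=
  calc ∑' k, f k ≤ (Fintype.piFinset fun m => Icc (j m - 1) (j m + 1)).card * 1 :=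
        ENNReal.tsum_subtype_le_card_mul _ f 1
          (fun k hk => absurd k.2.2.mem_piFinset_Icc hk) hf
    _ ≤ 3 ^ d := by rw [mul_one]; exact_mod_cast card_piFinset_Icc_le j

theorem one_le_nsup (hj : j ≠ 0) : 1 ≤ nsup j := by
  obtain ⟨i, hi⟩ := Function.ne_iff.mp hj
  unfold nsup
  exact_mod_cast (Nat.one_le_iff_ne_zero.mpr hi).trans (le_sup (mem_univ i))

theorem nsup_le {n : ℕ} (hj : ∀ i, j i ≤ n) : nsup j ≤ n := by
  unfold nsup
  exact_mod_cast Finset.sup_le fun i _ => hj i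

end Lattice

section Cube

variable {d : ℕ}

def cube (d m : ℕ) : Finset (Fin d → ℕ) := Fintype.piFinset fun _ => range m

def shell (d n : ℕ) : Finset (Fin d → ℕ) := cube d (n + 2) \ cube d n

noncomputable def cubeIndicator (d n : ℕ) : (Fin d → ℕ) → ℂ := (cube d (n + 1) : Set _).indicator 1

theorem mem_cube {m : ℕ} {j : Fin d → ℕ} : j ∈ cube d m ↔ ∀ i, j i < m := by
  simp [cube]

theorem card_cube (m : ℕ) : (cube d m).card = m ^ d := by
  simp [cube]

theorem cube_mono {m m' : ℕ} (h : m ≤ m') : cube d m ⊆ cube d m' := fun _ hj =>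
  mem_cube.mpr fun i => (mem_cube.mp hj i).trans_le h

theorem card_shell_le {n : ℕ} (hn : 1 ≤ n) :
    ((shell d n).card : ℝ) ≤ 2 * d * (3 * n) ^ (d - 1) := by
  have hcard : ((shell d n).card : ℝ) = ((n : ℝ) + 2) ^ d - (n : ℝ) ^ d := by
    rw [shell, card_sdiff_of_subset (cube_mono (by omega)), card_cube, card_cube,
      Nat.cast_sub (Nat.pow_le_pow_left (by omega) d)]
    push_cast; ring
  have hn' : (1 : ℝ) ≤ n := by exact_mod_cast hn
  calc ((shell d n).card : ℝ) ≤ |((n : ℝ) + 2) - n| * d * max |(n : ℝ) + 2| |(n : ℝ)| ^ (d - 1) :=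
        hcard ▸ (le_abs_self _).trans (abs_pow_sub_pow_le _ _ d)
    _ = 2 * d * ((n : ℝ) + 2) ^ (d - 1) := by
        rw [add_sub_cancel_left, abs_two, abs_of_nonneg (by positivity),
          abs_of_nonneg (Nat.cast_nonneg n), max_eq_left (by linarith)]
    _ ≤ 2 * d * (3 * n) ^ (d - 1) := by gcongr; linarith

theorem norm_cubeIndicator_sub_le_one (n : ℕ) (j k : Fin d → ℕ) :
    ‖cubeIndicator d n j - cubeIndicator d n k‖ ≤ 1 := by
  unfold cubeIndicator Set.indicator
  split_ifs <;> simp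

theorem cubeIndicator_eq_of_nbr {n : ℕ} {j k : Fin d → ℕ} (h : nbr j k) (hj : j ∉ shell d n) :
    cubeIndicator d n j = cubeIndicator d n k := by
  simp only [shell, mem_sdiff, not_and_not_right, mem_cube] at hj
  unfold cubeIndicator
  by_cases hjn : ∀ i, j i < n
  · have hj' : ∀ i, j i < n + 1 := fun i => by have := hjn i; omega
    have hk : ∀ i, k i < n + 1 := fun i => by have := hjn i; have := h.apply_le_add_one i; omega
    rw [Set.indicator_of_mem (mem_coe.mpr (mem_cube.mpr hj')),
      Set.indicator_of_mem (mem_coe.mpr (mem_cube.mpr hk))]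
    rfl
  · obtain ⟨i, hi⟩ : ∃ i, n + 2 ≤ j i := by simpa using mt hj hjn
    have hj' : ¬ ∀ i, j i < n + 1 := fun h' => by have := h' i; omega
    have hk : ¬ ∀ i, k i < n + 1 := fun h' => by
      have := h' i; have := h.symm_s6.apply_le_add_one i; omega
    rw [Set.indicator_of_notMem (mt (mem_cube.mp ∘ mem_coe.mp) hj'),
      Set.indicator_of_notMem (mt (mem_cube.mp ∘ mem_coe.mp) hk)]

end Cube

section HardySums

variable {d : ℕ}

noncomputable def weightedSum (p t : ℝ) (u : (Fin d → ℕ) → ℂ) : ℝ≥0∞ :=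
  ∑' j : {j : Fin d → ℕ // j ≠ 0}, ENNReal.ofReal (‖u j.1‖ ^ p / nsup j.1 ^ t)

noncomputable def gradientSum (p : ℝ) (u : (Fin d → ℕ) → ℂ) : ℝ≥0∞ :=
  ∑' (j : {j : Fin d → ℕ // j ≠ 0}) (k : {k : Fin d → ℕ // k ≠ 0 ∧ nbr j.1 k}),
    ENNReal.ofReal (‖u j.1 - u k.1‖ ^ p)

theorem norm_cubeIndicator_le_one (n : ℕ) (j : Fin d → ℕ) : ‖cubeIndicator d n j‖ ≤ 1 :=
  le_of_le_of_eq (norm_indicator_le_norm_self _ _) norm_one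

theorem weightedSum_cubeIndicator_ne_top {p t : ℝ} (hp : 0 < p) (ht : 0 ≤ t) (n : ℕ) :
    weightedSum p t (cubeIndicator d n) ≠ ⊤ := by
  refine ne_top_of_le_ne_top (ENNReal.mul_ne_top (ENNReal.natCast_ne_top _) ENNReal.one_ne_top)
    (ENNReal.tsum_subtype_le_card_mul (cube d (n + 1)) _ 1 (fun j hj => ?_) fun j => ?_)
  · rw [cubeIndicator, Set.indicator_of_notMem (mt mem_coe.mp hj), norm_zero,
      Real.zero_rpow hp.ne', zero_div, ENNReal.ofReal_zero]
  · have hj := one_le_nsup j.2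
    refine ENNReal.ofReal_le_one.mpr (div_le_one_of_le₀ ?_ (by positivity))
    calc ‖cubeIndicator d n j.1‖ ^ p ≤ 1 :=
          Real.rpow_le_one (norm_nonneg _) (norm_cubeIndicator_le_one n j.1) hp.le
      _ ≤ nsup j.1 ^ t := Real.one_le_rpow hj ht

theorem ofReal_pow_div_rpow_le_weightedSum_cubeIndicator (p : ℝ) {t : ℝ} (ht : 0 ≤ t)
    (hd : d ≠ 0) (n : ℕ) :
    ENNReal.ofReal ((n : ℝ) ^ d / (n : ℝ) ^ t) ≤ weightedSum p t (cubeIndicator d n) := by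
  calc ENNReal.ofReal ((n : ℝ) ^ d / (n : ℝ) ^ t)
        = ((n ^ d : ℕ) : ℝ≥0∞) * ENNReal.ofReal (1 / (n : ℝ) ^ t) := by
        rw [div_eq_mul_one_div, ENNReal.ofReal_mul (by positivity)]
        norm_cast
    _ ≤ ((cube d (n + 1)).filter (· ≠ 0)).card * ENNReal.ofReal (1 / (n : ℝ) ^ t) := by
        gcongr
        have h0 : (0 : Fin d → ℕ) ∈ cube d (n + 1) := mem_cube.mpr fun _ => n.succ_pos
        rw [filter_ne', card_erase_of_mem h0, card_cube]
        have := Nat.pow_lt_pow_left (Nat.lt_add_one n) hd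
        omega
    _ ≤ weightedSum p t (cubeIndicator d n) :=
        ENNReal.card_mul_le_tsum_subtype _ _ _ fun j hj => by
          rw [cubeIndicator, Set.indicator_of_mem (mem_coe.mpr hj), Pi.one_apply, norm_one,
            Real.one_rpow]
          have hjn : nsup j.1 ≤ n := nsup_le fun i => Nat.lt_succ_iff.mp (mem_cube.mp hj i)
          have hj0 : 0 < nsup j.1 := one_pos.trans_le (one_le_nsup j.2)
          exact ENNReal.ofReal_le_ofReal (one_div_le_one_div_of_le (by positivity)
            (Real.rpow_le_rpow hj0.le hjn ht))

theorem gradientSum_cubeIndicator_le {p : ℝ} (hp : 0 < p) (n : ℕ) :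
    gradientSum p (cubeIndicator d n) ≤ (shell d n).card * 3 ^ d :=
  ENNReal.tsum_subtype_le_card_mul _ _ _
    (fun j hj => ENNReal.tsum_eq_zero.mpr fun k => by
      rw [cubeIndicator_eq_of_nbr k.2.2 hj, sub_self, norm_zero, Real.zero_rpow hp.ne',
        ENNReal.ofReal_zero])
    fun j => tsum_nbr_le j.1 _ fun _ => ENNReal.ofReal_le_one.mpr
      (Real.rpow_le_one (norm_nonneg _) (norm_cubeIndicator_sub_le_one n _ _) hp.le)

end HardySums

theorem pow_div_rpow_le_of_cubeIndicator {d n : ℕ} {p t C : ℝ} (hp : 0 < p) (ht : 0 ≤ t)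
    (hd : d ≠ 0) (hn : 1 ≤ n)
    (hH : weightedSum p t (cubeIndicator d n) ≤
      ENNReal.ofReal C * gradientSum p (cubeIndicator d n)) :
    (n : ℝ) ^ d / (n : ℝ) ^ t ≤ C * (2 * d * 3 ^ (d - 1) * 3 ^ d) * (n : ℝ) ^ (d - 1) := by
  have hchain : ENNReal.ofReal ((n : ℝ) ^ d / (n : ℝ) ^ t) ≤
      ENNReal.ofReal (C * (2 * d * (3 * n) ^ (d - 1) * 3 ^ d)) := by
    rw [ENNReal.ofReal_mul' (by positivity), ENNReal.ofReal_mul (by positivity),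
      ENNReal.ofReal_pow zero_le_three, ENNReal.ofReal_ofNat]
    calc ENNReal.ofReal ((n : ℝ) ^ d / (n : ℝ) ^ t)
        ≤ ENNReal.ofReal C * ((shell d n).card * 3 ^ d) :=
          (ofReal_pow_div_rpow_le_weightedSum_cubeIndicator p ht hd n).trans
            (hH.trans (by gcongr; exact gradientSum_cubeIndicator_le hp n))
      _ ≤ _ := by
          rw [← ENNReal.ofReal_natCast]
          gcongr
          exact card_shell_le hn
  refine le_of_le_of_eq ((ENNReal.ofReal_le_ofReal_iff'.mp hchain).resolve_right
    (not_le.mpr (by positivity))) ?_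
  ring

theorem hardy_exponent_optimal_p_small_general (d : ℕ) (p t C : ℝ)
    (hp0 : 0 < p) (hd : 1 < d) (ht : 0 < t)
    (H : ∀ u : (Fin d → ℕ) → ℂ,
      (∑' (j : {j : Fin d → ℕ // j ≠ 0}),
          ENNReal.ofReal (‖u j.1‖ ^ p / nsup j.1 ^ t)) ≠ ⊤ →
      (∑' (j : {j : Fin d → ℕ // j ≠ 0}),
          ENNReal.ofReal (‖u j.1‖ ^ p / nsup j.1 ^ t))
        ≤ ENNReal.ofReal C *
            ∑' (j : {j : Fin d → ℕ // j ≠ 0})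
              (k : {k : Fin d → ℕ // k ≠ 0 ∧ nbr j.1 k}),
              ENNReal.ofReal (‖u j.1 - u k.1‖ ^ p)) :
    1 ≤ t := by
  by_contra! ht1
  have hd0 : d ≠ 0 := by omega
  have hbound (n : ℕ) (hn : 1 ≤ n) : (n : ℝ) ^ (1 - t) ≤ C * (2 * d * 3 ^ (d - 1) * 3 ^ d) :=
    rpow_one_sub_le_of_pow_div_rpow_le hn hd0 <|
      pow_div_rpow_le_of_cubeIndicator hp0 ht.le hd0 hn <|
        H _ (weightedSum_cubeIndicator_ne_top hp0 ht.le n)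
  obtain ⟨n, hKn, hn⟩ := (((tendsto_rpow_atTop (sub_pos.2 ht1)).comp
    tendsto_natCast_atTop_atTop).eventually_gt_atTop _).and (Filter.eventually_ge_atTop 1) |>.exists
  exact (hbound n hn).not_gt hKn

/-- Optimality of the exponent `1` in the Hardy inequality on `ℤ₊^d` for `0 < p ≤ 1 < d`:
if the inequality with weight `‖j‖_∞^t` holds for all admissible `u`, then `t ≥ 1`. -/
theorem hardy_exponent_optimal_p_small (d : ℕ) (p t C : ℝ)
    (hp0 : 0 < p) (hp1 : p ≤ 1) (hd : 1 < d) (ht : 0 < t)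
    (H : ∀ u : (Fin d → ℕ) → ℂ,
      (∑' (j : {j : Fin d → ℕ // j ≠ 0}),
          ENNReal.ofReal (‖u j.1‖ ^ p / nsup j.1 ^ t)) ≠ ⊤ →
      (∑' (j : {j : Fin d → ℕ // j ≠ 0}),
          ENNReal.ofReal (‖u j.1‖ ^ p / nsup j.1 ^ t))
        ≤ ENNReal.ofReal C *
            ∑' (j : {j : Fin d → ℕ // j ≠ 0})
              (k : {k : Fin d → ℕ // k ≠ 0 ∧ nbr j.1 k}),
              ENNReal.ofReal (‖u j.1 - u k.1‖ ^ p)) :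
    1 ≤ t :=
  hardy_exponent_optimal_p_small_general d p t C hp0 hd ht H
end

section
/- Let d = p (with d ∈ ℕ, d ≥ 1). Then there is NO finite constant C such that ∑_{j ∈ ℤ₊^d \ {0}} |u(j)|^p / ‖j‖_∞^p ≤ C · ∑_{j ∈ ℤ₊^d \ {0}} ∑_{k ∈ ℤ₊^d, k ∼ j} |u(j) − u(k)|^p holds for all functions u : ℤ₊^d → ℂ with u(0) = 0. In other words, the Hardy inequality in the critical case d = p fails for ε = 0. -/
open scoped ENNReal

lemma le_one_of_nbr_zero {d : ℕ} {j : Fin d → ℕ} (h : nbr j 0) : j ≤ 1 := by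
  simp only [nbr, Pi.zero_apply, Nat.cast_zero, sub_zero] at h
  intro i
  have hi : (j i : ℤ) ^ 2 ≤ 1 :=
    h ▸ Finset.single_le_sum (fun i _ => sq_nonneg (j i : ℤ)) (Finset.mem_univ i)
  exact_mod_cast (show (j i : ℤ) ≤ 1 by nlinarith)

lemma finite_setOf_nbr_zero (d : ℕ) : {j : Fin d → ℕ | nbr j 0}.Finite :=
  (Set.finite_Iic 1).subset fun _ => le_one_of_nbr_zero

lemma tsum_subtype_indicator_singleton {α M : Type*} [AddCommMonoid M] [TopologicalSpace M]
    (s : Set α) (a : α) (c : M) :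
    ∑' k : s, ({a} : Set α).indicator (fun _ => c) k = s.indicator (fun _ => c) a := by
  by_cases ha : a ∈ s
  · rw [Set.indicator_of_mem ha]
    refine (tsum_eq_single ⟨a, ha⟩ fun k hk => Set.indicator_of_notMem ?_ _).trans (by simp)
    exact fun h => hk (Subtype.ext h)
  · rw [Set.indicator_of_notMem ha]
    refine (tsum_congr fun k => Set.indicator_of_notMem ?_ _).trans tsum_zero
    rintro rfl
    exact ha k.2

lemma ofReal_norm_indicator_compl_sub_rpow {α : Type*} {a j : α} (hj : j ≠ a) (k : α)
    {p : ℝ} (hp : p ≠ 0) :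
    ENNReal.ofReal (‖({a}ᶜ : Set α).indicator (fun _ => (1 : ℂ)) j -
        ({a}ᶜ : Set α).indicator (fun _ => (1 : ℂ)) k‖ ^ p) =
      ({a} : Set α).indicator (fun _ => 1) k := by
  by_cases hk : k = a <;> simp [hj, hk, Real.zero_rpow hp]

lemma tsum_nbr_energy_indicator_ne_top (d : ℕ) {p : ℝ} (hp : p ≠ 0) :
    ∑' (j : {j : Fin d → ℕ // j ≠ 0}) (k : {k : Fin d → ℕ // nbr j.1 k}),
      ENNReal.ofReal (‖({0}ᶜ : Set (Fin d → ℕ)).indicator (fun _ => (1 : ℂ)) j.1 -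
        ({0}ᶜ : Set (Fin d → ℕ)).indicator (fun _ => (1 : ℂ)) k.1‖ ^ p) ≠ ∞ := by
  set S := {j : Fin d → ℕ | nbr j 0}
  have hS : (S.encard : ℝ≥0∞) < ∞ :=
    ENat.toENNReal_lt_top.2 (finite_setOf_nbr_zero d).encard_lt_top
  refine (lt_of_le_of_lt ?_ hS).ne
  calc _ = ∑' j : {j : Fin d → ℕ // j ≠ 0}, S.indicator (fun _ => (1 : ℝ≥0∞)) j.1 :=
        tsum_congr fun j => by
          simp_rw [ofReal_norm_indicator_compl_sub_rpow j.2 _ hp]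
          exact tsum_subtype_indicator_singleton {k | nbr j.1 k} 0 1
    _ ≤ ∑' j, S.indicator (fun _ => 1) j :=
        ENNReal.tsum_comp_le_tsum_of_injective Subtype.val_injective _
    _ = (S.encard : ℝ≥0∞) := by rw [← tsum_subtype, ENNReal.tsum_set_one]

lemma nsup_cons_of_le {n a : ℕ} {v : Fin n → ℕ} (hv : ∀ i, v i ≤ a) :
    nsup (Fin.cons a v : Fin (n + 1) → ℕ) = a := by
  rw [nsup, Nat.cast_inj]
  refine le_antisymm (Finset.sup_le fun i _ => ?_)
    (Finset.le_sup (f := Fin.cons a v) (Finset.mem_univ 0))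
  cases i using Fin.cases <;> simp [hv]

lemma tsum_ofReal_one_div_succ_eq_top : ∑' r : ℕ, ENNReal.ofReal (1 / (r + 1)) = ∞ := by
  by_contra h
  have := (ENNReal.summable_toReal h).congr fun r => ENNReal.toReal_ofReal (by positivity)
  exact Real.not_summable_one_div_natCast ((summable_nat_add_iff 1).1 (by exact_mod_cast this))

lemma tsum_ofReal_one_div_nsup_pow_eq_top (n : ℕ) :
    ∑' j : {j : Fin (n + 1) → ℕ // j ≠ 0},
      ENNReal.ofReal (1 / nsup j.1 ^ (n + 1)) = ∞ := by
  let shell : (Σ r : ℕ, Fin n → Fin (r + 1)) → {j : Fin (n + 1) → ℕ // j ≠ 0} :=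
    fun x => ⟨Fin.cons (x.1 + 1) fun i => x.2 i, fun h => by simpa using congrFun h 0⟩
  have shell_injective : Function.Injective shell := by
    rintro ⟨r, v⟩ ⟨s, w⟩ h
    obtain rfl : r = s := by simpa [shell] using congrArg (fun j => j.1 0) h
    obtain rfl : v = w := funext fun i =>
      Fin.ext (by simpa [shell] using congrArg (fun j => j.1 i.succ) h)
    rfl
  have nsup_shell (x) : nsup (shell x).1 = x.1 + 1 := by
    exact_mod_cast nsup_cons_of_le fun i => (x.2 i).2.le
  refine top_unique (tsum_ofReal_one_div_succ_eq_top ▸ ?_)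
  calc ∑' r : ℕ, ENNReal.ofReal (1 / (r + 1))
      = ∑' x, ENNReal.ofReal (1 / nsup (shell x).1 ^ (n + 1)) := by
        rw [ENNReal.tsum_sigma']
        refine tsum_congr fun r => ?_
        simp only [nsup_shell, tsum_fintype, Finset.sum_const, Finset.card_univ, Fintype.card_fun,
          Fintype.card_fin, nsmul_eq_mul]
        rw [← ENNReal.ofReal_natCast, ← ENNReal.ofReal_mul (by positivity)]
        congr 1
        push_cast
        field_simp
        ring
    _ ≤ _ := ENNReal.tsum_comp_le_tsum_of_injective shell_injective _

/-- Failure of the Hardy inequality on `ℤ₊^d` in the critical case `d = p` with `ε = 0`: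
no finite constant `C` works for all `u` with `u(0) = 0`. -/
theorem hardy_critical_fails (d : ℕ) (p : ℝ) (hd : 1 ≤ d) (hdp : (d : ℝ) = p) :
    ¬ ∃ C : ℝ, ∀ u : (Fin d → ℕ) → ℂ, u 0 = 0 →
      (∑' (j : {j : Fin d → ℕ // j ≠ 0}),
          ENNReal.ofReal (‖u j.1‖ ^ p / nsup j.1 ^ p))
        ≤ ENNReal.ofReal C *
            ∑' (j : {j : Fin d → ℕ // j ≠ 0})
              (k : {k : Fin d → ℕ // nbr j.1 k}),
              ENNReal.ofReal (‖u j.1 - u k.1‖ ^ p) := by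
  obtain ⟨n, rfl⟩ := Nat.exists_eq_add_of_le' hd
  subst hdp
  rintro ⟨C, hC⟩
  set u : (Fin (n + 1) → ℕ) → ℂ := ({0}ᶜ : Set (Fin (n + 1) → ℕ)).indicator fun _ => 1
  have hardy_sum_eq_top : ∑' j : {j : Fin (n + 1) → ℕ // j ≠ 0},
      ENNReal.ofReal (‖u j.1‖ ^ ((n + 1 : ℕ) : ℝ) /
        nsup j.1 ^ ((n + 1 : ℕ) : ℝ)) = ∞ := by
    rw [← tsum_ofReal_one_div_nsup_pow_eq_top n]
    exact tsum_congr fun j => by simp only [Real.rpow_natCast]; simp [u, j.2]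
  have energy_ne_top := tsum_nbr_energy_indicator_ne_top (n + 1) (p := ((n + 1 : ℕ) : ℝ))
    (by positivity)
  have hu := hC u (by simp [u])
  rw [hardy_sum_eq_top, top_le_iff] at hu
  exact ENNReal.mul_ne_top ENNReal.ofReal_ne_top energy_ne_top hu
end

section
/- Let 0 < d < p. Then there exists a constant c = c(d, p) < ∞ such that for every function u : ℤ^d → ℂ with u(0) = 0, one has ∑_{j ∈ ℤ^d \ {0}} |u(j)|^p / ‖j‖_∞^p ≤ c · ∑_{j ∈ ℤ^d \ {0}} ∑_{k ∈ ℤ^d, k ∼ j} |u(j) − u(k)|^p. -/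
open scoped ENNReal

/-- The sup-norm `‖x‖_∞` of a point of `ℤ^d`, as a real number. -/
noncomputable def zsup {d : ℕ} (x : Fin d → ℤ) : ℝ :=
  ((Finset.univ.sup fun i => (x i).natAbs : ℕ) : ℝ)

/-- `x ∼ y`: the Euclidean distance between `x` and `y` equals `1`. -/
def nbrZ {d : ℕ} (x y : Fin d → ℤ) : Prop := ∑ i, (x i - y i) ^ 2 = 1

/-!
Let `j ≠ 0` and `R = ‖j‖_∞`. The points `coarse j k ≈ j / 2 ^ k` (rounded toward `0`) run from
`j` to `0`, and consecutive ones are joined by a lattice path that adjusts one coordinate at a time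
in at most `d R / 2 ^ k` unit steps ("level `k`"). Telescoping `u` along this path and applying
Hölder's inequality with the weight `(R / 2 ^ k) ^ β` on level `k`, where `d - 1 < β < p - 1`, gives
`|u j| ^ p / R ^ p ≲ R ^ (-(1 + β)) ∑ₖ (R / 2 ^ k) ^ β ∑_{level k} |u a - u b| ^ p`;
the dual weights form a geometric series because `β < p - 1`.

Summing over `j`, a fixed edge `(a, b)` is a level-`k` step only for the `≲ 2 ^ (k d) ‖a‖_∞`
points `j` of a box around `2 ^ k a`, and each contributes weight `≲ 2 ^ (-k (1 + β)) / ‖a‖_∞`.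
The resulting series in `k` is geometric with ratio `2 ^ (d - 1 - β) < 1`.
-/

open Finset

namespace ENNReal

lemma pow_rpow_comm (x : ℝ≥0∞) (k : ℕ) (y : ℝ) : (x ^ k) ^ y = (x ^ y) ^ k := by
  rw [← rpow_natCast, ← rpow_natCast, ← rpow_mul, ← rpow_mul, mul_comm]

lemma mul_rpow_sub_one {x : ℝ≥0∞} (hx : x ≠ ⊤) {γ : ℝ} (hγ : 0 < γ) : x * x ^ (γ - 1) = x ^ γ := by
  rcases eq_or_ne x 0 with rfl | hx₀
  · simp [zero_rpow_of_pos hγ]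
  · calc x * x ^ (γ - 1) = x ^ (1 : ℝ) * x ^ (γ - 1) := by rw [rpow_one]
      _ = x ^ γ := by rw [← rpow_add _ _ hx₀ hx, add_sub_cancel]

lemma inv_one_sub_two_rpow_ne_top {x : ℝ} (hx : x < 0) : (1 - (2 : ℝ≥0∞) ^ x)⁻¹ ≠ ⊤ :=
  inv_ne_top.mpr fun h => (tsub_eq_zero_iff_le.mp h).not_gt
    (rpow_lt_one_of_one_lt_of_neg one_lt_two hx)

lemma rpow_sum_le_weighted {ι : Type*} (s : Finset ι) {p : ℝ} (hp : 1 ≤ p)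
    (w f : ι → ℝ≥0∞) (hw₀ : ∀ i ∈ s, w i ≠ 0) (hw : ∀ i ∈ s, w i ≠ ⊤) :
    (∑ i ∈ s, f i) ^ p ≤ (∑ i ∈ s, w i) ^ (p - 1) * ∑ i ∈ s, w i ^ (1 - p) * f i ^ p := by
  have hp₀ : 0 < p := by linarith
  have hHolder := inner_le_weight_mul_Lp_of_nonneg s hp w fun i => (w i)⁻¹ * f i
  rw [sum_congr rfl fun i hi => ENNReal.mul_inv_cancel_left (hw₀ i hi) (hw i hi),
    sum_congr rfl fun i hi => show w i * ((w i)⁻¹ * f i) ^ p = w i ^ (1 - p) * f i ^ p by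
      rw [mul_rpow_of_nonneg _ _ hp₀.le, inv_rpow, ← rpow_neg, ← mul_assoc, sub_eq_add_neg,
        rpow_add _ _ (hw₀ i hi) (hw i hi), rpow_one]] at hHolder
  calc (∑ i ∈ s, f i) ^ p
      ≤ ((∑ i ∈ s, w i) ^ (1 - p⁻¹) * (∑ i ∈ s, w i ^ (1 - p) * f i ^ p) ^ p⁻¹) ^ p := by
        gcongr
    _ = (∑ i ∈ s, w i) ^ (p - 1) * ∑ i ∈ s, w i ^ (1 - p) * f i ^ p := by
        rw [mul_rpow_of_nonneg _ _ hp₀.le, ← rpow_mul, ← rpow_mul, inv_mul_cancel₀ hp₀.ne',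
          rpow_one, sub_mul, one_mul, inv_mul_cancel₀ hp₀.ne']

lemma tsum_subtype_eq_tsum_ite {α : Type*} (p : α → Prop) [DecidablePred p] (f : α → ℝ≥0∞) :
    ∑' a : {a // p a}, f a = ∑' a, if p a then f a else 0 :=
  (tsum_subtype {a | p a} f).trans (tsum_congr fun _ => Set.indicator_apply _ _ _)

lemma tsum_mul_comp_le_of_fiber {α γ : Type*} (ψ : α → γ) (w : α → ℝ≥0∞) (g : γ → ℝ≥0∞)
    {C : ℝ≥0∞} (h : ∀ c, ∑' a : ψ ⁻¹' {c}, w a ≤ C) : ∑' a, w a * g (ψ a) ≤ C * ∑' c, g c := by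
  rw [← tsum_fiberwise _ ψ, ← ENNReal.tsum_mul_left]
  refine ENNReal.tsum_le_tsum fun c => ?_
  calc ∑' a : ψ ⁻¹' {c}, w a * g (ψ a) = (∑' a : ψ ⁻¹' {c}, w a) * g c := by
        rw [← ENNReal.tsum_mul_right]
        exact tsum_congr fun a => by rw [Set.mem_singleton_iff.mp a.2]
    _ ≤ C * g c := by gcongr; exact h c

end ENNReal

namespace HardyZ

lemma div_two_pow_succ (x k : ℕ) : x / 2 ^ (k + 1) = x / 2 ^ k / 2 := by
  rw [Nat.div_div_eq_div_mul, pow_succ]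

lemma div_two_pow_succ_le (x k : ℕ) : x / 2 ^ (k + 1) ≤ x / 2 ^ k := by
  rw [div_two_pow_succ]; exact Nat.div_le_self _ _

variable {d : ℕ}

instance : DecidableRel (nbrZ (d := d)) := fun _ _ => inferInstanceAs (Decidable (_ = _))

def supNorm (x : Fin d → ℤ) : ℕ := univ.sup fun l => (x l).natAbs

lemma zsup_eq_supNorm (x : Fin d → ℤ) : zsup x = supNorm x := rfl

lemma natAbs_le_supNorm (x : Fin d → ℤ) (l : Fin d) : (x l).natAbs ≤ supNorm x :=
  le_sup (f := fun l => (x l).natAbs) (mem_univ l)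

lemma supNorm_le_iff {x : Fin d → ℤ} {n : ℕ} : supNorm x ≤ n ↔ ∀ l, (x l).natAbs ≤ n := by
  simp [supNorm]

lemma supNorm_pos {x : Fin d → ℤ} (hx : x ≠ 0) : 0 < supNorm x := by
  obtain ⟨l, hl⟩ := Function.ne_iff.mp hx
  exact (Int.natAbs_pos.mpr hl).trans_le (natAbs_le_supNorm x l)

lemma div_two_pow_le_supNorm_div (x : Fin d → ℤ) (k : ℕ) (l : Fin d) :
    (x l).natAbs / 2 ^ k ≤ supNorm x / 2 ^ k :=
  Nat.div_le_div_right (natAbs_le_supNorm x l)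

/-! ### Dyadic lattice paths to the origin -/

def signed (j : Fin d → ℤ) (c : Fin d → ℕ) : Fin d → ℤ := fun l => (j l).sign * c l

lemma natAbs_signed_le (j : Fin d → ℤ) (c : Fin d → ℕ) (l : Fin d) :
    (signed j c l).natAbs ≤ c l := by
  rw [signed, Int.natAbs_mul, Int.natAbs_sign, Int.natAbs_natCast]
  split_ifs <;> simp

lemma natAbs_signed {j : Fin d → ℤ} {l : Fin d} (hl : j l ≠ 0) (c : Fin d → ℕ) :
    (signed j c l).natAbs = c l := by
  rw [signed, Int.natAbs_mul, Int.natAbs_sign_of_ne_zero hl, Int.natAbs_natCast, one_mul]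

lemma signed_congr {j : Fin d → ℤ} {c c' : Fin d → ℕ} (h : ∀ l, j l ≠ 0 → c l = c' l) :
    signed j c = signed j c' := by
  funext l
  by_cases hl : j l = 0
  · simp [signed, hl]
  · rw [signed, signed, h l hl]

lemma natAbs_sub_two_pow_mul_signed_le (j : Fin d → ℤ) (c : Fin d → ℕ) (k : ℕ) (l : Fin d) :
    (j l - 2 ^ k * signed j c l).natAbs ≤ ((j l).natAbs - 2 ^ k * c l : ℤ).natAbs := by
  by_cases hl : j l = 0
  · simp [signed, hl]
  · conv_lhs => rw [← Int.sign_mul_natAbs (j l)]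
    rw [signed, show (j l).sign * ((j l).natAbs : ℤ) - 2 ^ k * ((j l).sign * c l)
      = (j l).sign * ((j l).natAbs - 2 ^ k * c l) by ring, Int.natAbs_mul,
      Int.natAbs_sign_of_ne_zero hl, one_mul]

/-- `j / 2 ^ k`, rounded toward `0` in each coordinate. -/
def coarse (j : Fin d → ℤ) (k : ℕ) : Fin d → ℤ := signed j fun l => (j l).natAbs / 2 ^ k

lemma coarse_zero (j : Fin d → ℤ) : coarse j 0 = j := by
  funext l; simp [coarse, signed, Int.sign_mul_abs]

lemma coarse_eq_zero {j : Fin d → ℤ} {k : ℕ} (hk : supNorm j < 2 ^ k) : coarse j k = 0 := by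
  funext l
  simp [coarse, signed, Nat.div_eq_of_lt ((natAbs_le_supNorm j l).trans_lt hk)]

lemma natAbs_sub_two_pow_mul_coarse_lt (j : Fin d → ℤ) (k : ℕ) (l : Fin d) :
    (j l - 2 ^ k * coarse j k l).natAbs < 2 ^ k := by
  refine (natAbs_sub_two_pow_mul_signed_le _ _ k l).trans_lt ?_
  have hdiv : ((j l).natAbs : ℤ)
      = 2 ^ k * ((j l).natAbs / 2 ^ k : ℕ) + ((j l).natAbs % 2 ^ k : ℕ) := by
    exact_mod_cast (Nat.div_add_mod _ _).symm
  have hmod : (((j l).natAbs % 2 ^ k : ℕ) : ℤ) < 2 ^ k := by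
    exact_mod_cast Nat.mod_lt _ (Nat.two_pow_pos k)
  omega

def mix (j : Fin d → ℤ) (k n : ℕ) : Fin d → ℤ :=
  signed j fun l => if (l : ℕ) < n then (j l).natAbs / 2 ^ k else (j l).natAbs / 2 ^ (k + 1)

lemma mix_zero (j : Fin d → ℤ) (k : ℕ) : mix j k 0 = coarse j (k + 1) := by
  simp [mix, coarse]

lemma mix_card (j : Fin d → ℤ) (k : ℕ) : mix j k d = coarse j k := by
  simp [mix, coarse]

def numSteps (j : Fin d → ℤ) (k : ℕ) (i : Fin d) : ℕ :=
  (j i).natAbs / 2 ^ k - (j i).natAbs / 2 ^ (k + 1)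

lemma numSteps_le (j : Fin d → ℤ) (k : ℕ) (i : Fin d) : numSteps j k i ≤ (j i).natAbs / 2 ^ k :=
  Nat.sub_le _ _

def pathPt (j : Fin d → ℤ) (k : ℕ) (i : Fin d) (t : ℕ) : Fin d → ℤ :=
  signed j fun l => if l < i then (j l).natAbs / 2 ^ k
    else if l = i then (j l).natAbs / 2 ^ (k + 1) + t else (j l).natAbs / 2 ^ (k + 1)

lemma pathPt_zero (j : Fin d → ℤ) (k : ℕ) (i : Fin d) : pathPt j k i 0 = mix j k i := by
  refine signed_congr fun l _ => ?_
  rcases lt_trichotomy l i with h | rfl | h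
  · simp [h, Fin.lt_def.mp h]
  · simp
  · simp [h.ne', not_lt.mpr h.le, not_lt.mpr (Fin.le_def.mp h.le)]

lemma pathPt_numSteps (j : Fin d → ℤ) (k : ℕ) (i : Fin d) :
    pathPt j k i (numSteps j k i) = mix j k (i + 1) := by
  refine signed_congr fun l _ => ?_
  have hle := div_two_pow_succ_le (j l).natAbs k
  rcases lt_trichotomy l i with h | rfl | h
  · simp [h, show (l : ℕ) < i + 1 by have := Fin.lt_def.mp h; omega]
  · simp [numSteps]; omega
  · simp [h.ne', not_lt.mpr h.le, show ¬ (l : ℕ) < i + 1 by have := Fin.lt_def.mp h; omega]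

lemma sum_range_numSteps {M : Type*} [AddCommGroup M] (u : (Fin d → ℤ) → M)
    (j : Fin d → ℤ) (k : ℕ) (i : Fin d) :
    ∑ t ∈ range (numSteps j k i), (u (pathPt j k i (t + 1)) - u (pathPt j k i t))
      = u (mix j k (i + 1)) - u (mix j k i) := by
  rw [sum_range_sub (fun t => u (pathPt j k i t)), pathPt_numSteps, pathPt_zero]

lemma coarse_sub_coarse_succ {M : Type*} [AddCommGroup M] (u : (Fin d → ℤ) → M)
    (j : Fin d → ℤ) (k : ℕ) :
    u (coarse j k) - u (coarse j (k + 1))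
      = ∑ i, ∑ t ∈ range (numSteps j k i), (u (pathPt j k i (t + 1)) - u (pathPt j k i t)) := by
  simp_rw [sum_range_numSteps]
  rw [Fin.sum_univ_eq_sum_range (fun n => u (mix j k (n + 1)) - u (mix j k n)),
    sum_range_sub (fun n => u (mix j k n)), mix_card, mix_zero]

/-- `z = (k, i, t)` indexes the unit step from `pathPt j k i t` to `pathPt j k i (t + 1)`. -/
def IsPathStep (j : Fin d → ℤ) (z : ℕ × Fin d × ℕ) : Prop := z.2.2 < numSteps j z.1 z.2.1

instance (j : Fin d → ℤ) : DecidablePred (IsPathStep j) :=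
  fun _ => inferInstanceAs (Decidable (_ < _))

def outer (j : Fin d → ℤ) (z : ℕ × Fin d × ℕ) : Fin d → ℤ := pathPt j z.1 z.2.1 (z.2.2 + 1)

def inner (j : Fin d → ℤ) (z : ℕ × Fin d × ℕ) : Fin d → ℤ := pathPt j z.1 z.2.1 z.2.2

def pathSteps (j : Fin d → ℤ) : Finset (ℕ × Fin d × ℕ) :=
  (range (supNorm j) ×ˢ univ ×ˢ range (supNorm j)).filter (IsPathStep j)

namespace IsPathStep

variable {j : Fin d → ℤ} {z : ℕ × Fin d × ℕ}

lemma one_le_div (h : IsPathStep j z) : 1 ≤ (j z.2.1).natAbs / 2 ^ z.1 :=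
  (Nat.zero_lt_of_lt h).trans_le (numSteps_le j _ _)

lemma one_le_supNorm_div (h : IsPathStep j z) : 1 ≤ supNorm j / 2 ^ z.1 :=
  h.one_le_div.trans (div_two_pow_le_supNorm_div j z.1 z.2.1)

lemma ne_zero (h : IsPathStep j z) : j z.2.1 ≠ 0 := by
  intro h0; have := h.one_le_div; simp [h0] at this

lemma lt_supNorm (h : IsPathStep j z) : z.1 < supNorm j ∧ z.2.2 < supNorm j := by
  have h2k : 2 ^ z.1 ≤ supNorm j := by
    simpa [Nat.one_le_div_iff (Nat.two_pow_pos _)] using h.one_le_supNorm_div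
  refine ⟨z.1.lt_two_pow_self.trans_le h2k, ?_⟩
  calc z.2.2 < numSteps j z.1 z.2.1 := h
    _ ≤ (j z.2.1).natAbs / 2 ^ z.1 := numSteps_le j _ _
    _ ≤ (j z.2.1).natAbs := Nat.div_le_self _ _
    _ ≤ supNorm j := natAbs_le_supNorm j _

lemma natAbs_outer (h : IsPathStep j z) :
    (outer j z z.2.1).natAbs = (j z.2.1).natAbs / 2 ^ (z.1 + 1) + z.2.2 + 1 := by
  simp [outer, pathPt, natAbs_signed h.ne_zero, add_assoc]

lemma step_eq (h : IsPathStep j z) :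
    z.2.2 = (outer j z z.2.1).natAbs - (j z.2.1).natAbs / 2 ^ (z.1 + 1) - 1 := by
  have := h.natAbs_outer; omega

lemma outer_ne_zero (h : IsPathStep j z) : outer j z ≠ 0 := by
  intro h0
  have := h.natAbs_outer
  simp [h0] at this

lemma nbrZ_outer_inner (h : IsPathStep j z) : nbrZ (outer j z) (inner j z) := by
  have hsq : ∀ l, (outer j z l - inner j z l) ^ 2 = if l = z.2.1 then 1 else 0 := by
    intro l
    by_cases hl : l = z.2.1
    · subst hl
      have hsign : (j z.2.1).sign ^ 2 = 1 := by
        rw [← Int.natAbs_sq, Int.natAbs_sign_of_ne_zero h.ne_zero]; rfl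
      simp only [outer, inner, pathPt, signed, lt_irrefl, if_false, if_true]
      push_cast
      linear_combination hsign
    · simp [outer, inner, pathPt, signed, hl]
  simp [nbrZ, hsq]

lemma supNorm_outer_le (h : IsPathStep j z) : supNorm (outer j z) ≤ supNorm j / 2 ^ z.1 := by
  unfold outer pathPt
  refine supNorm_le_iff.mpr fun l => (natAbs_signed_le j _ l).trans ?_
  refine le_trans ?_ (div_two_pow_le_supNorm_div j z.1 l)
  split_ifs with h1 h2
  · exact le_rfl
  · subst h2
    have hstep : z.2.2 < numSteps j z.1 z.2.1 := h
    have hle := div_two_pow_succ_le (j z.2.1).natAbs z.1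
    simp only [numSteps] at hstep
    omega
  · exact div_two_pow_succ_le _ _

end IsPathStep

lemma mem_pathSteps {j : Fin d → ℤ} {z : ℕ × Fin d × ℕ} : z ∈ pathSteps j ↔ IsPathStep j z := by
  refine ⟨fun hz => (mem_filter.mp hz).2, fun h => mem_filter.mpr ⟨?_, h⟩⟩
  simp [h.lt_supNorm]

lemma sum_pathSteps {M : Type*} [AddCommMonoid M] (j : Fin d → ℤ) (f : ℕ × Fin d × ℕ → M) :
    ∑ z ∈ pathSteps j, f z
      = ∑ k ∈ range (supNorm j), ∑ i, ∑ t ∈ range (numSteps j k i), f (k, i, t) := by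
  rw [sum_finset_product (pathSteps j) (range (supNorm j))
    (fun k => (univ ×ˢ range (supNorm j)).filter fun it => IsPathStep j (k, it))]
  · refine sum_congr rfl fun k _ => sum_finset_product _ _ _ fun it => ?_
    have := numSteps_le j k it.1
    have := div_two_pow_le_supNorm_div j k it.1
    have := Nat.div_le_self (supNorm j) (2 ^ k)
    simp only [mem_filter, mem_product, mem_univ, mem_range, true_and]
    exact ⟨And.right, fun h => ⟨by omega, h⟩⟩
  · intro z
    simp only [mem_filter, mem_product, mem_univ, mem_range, true_and, mem_pathSteps]
    exact ⟨fun h => ⟨h.lt_supNorm.1, h.lt_supNorm.2, h⟩, fun h => h.2.2⟩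

lemma eq_sum_pathSteps {M : Type*} [AddCommGroup M] {u : (Fin d → ℤ) → M} (hu : u 0 = 0)
    (j : Fin d → ℤ) : u j = ∑ z ∈ pathSteps j, (u (outer j z) - u (inner j z)) := by
  rw [sum_pathSteps]
  simp only [outer, inner]
  rw [sum_congr rfl fun k _ => (coarse_sub_coarse_succ u j k).symm,
    sum_range_sub' (fun k => u (coarse j k)), coarse_zero,
    coarse_eq_zero (supNorm j).lt_two_pow_self, hu, sub_zero]

/-! ### The weighted estimate at a single site -/

lemma sum_pathSteps_rpow_le (j : Fin d → ℤ) {γ : ℝ} (hγ : 0 < γ) :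
    ∑ z ∈ pathSteps j, ((supNorm j / 2 ^ z.1 : ℕ) : ℝ≥0∞) ^ (γ - 1)
      ≤ d * (1 - (2 : ℝ≥0∞) ^ (-γ))⁻¹ * (supNorm j : ℝ≥0∞) ^ γ := by
  set R := supNorm j
  have hlevel : ∀ k, ∑ i, ∑ _t ∈ range (numSteps j k i), ((R / 2 ^ k : ℕ) : ℝ≥0∞) ^ (γ - 1)
      ≤ d * ((R : ℝ≥0∞) ^ γ * ((2 : ℝ≥0∞) ^ (-γ)) ^ k) := by
    intro k
    set n := R / 2 ^ k
    have hn : (n : ℝ≥0∞) ≤ R * ((2 : ℝ≥0∞) ^ k)⁻¹ := by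
      rw [← div_eq_mul_inv, ENNReal.le_div_iff_mul_le (by simp) (by simp)]
      exact_mod_cast Nat.div_mul_le_self R (2 ^ k)
    calc ∑ i, ∑ _t ∈ range (numSteps j k i), (n : ℝ≥0∞) ^ (γ - 1)
        ≤ ∑ _i : Fin d, (n : ℝ≥0∞) * (n : ℝ≥0∞) ^ (γ - 1) := by
          gcongr with i
          rw [sum_const, card_range, nsmul_eq_mul]
          gcongr
          exact (numSteps_le j k i).trans (div_two_pow_le_supNorm_div j k i)
      _ = d * (n : ℝ≥0∞) ^ γ := by
          rw [sum_const, card_univ, Fintype.card_fin, nsmul_eq_mul,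
            ENNReal.mul_rpow_sub_one (ENNReal.natCast_ne_top n) hγ]
      _ ≤ d * ((R * ((2 : ℝ≥0∞) ^ k)⁻¹) ^ γ) := by gcongr
      _ = d * ((R : ℝ≥0∞) ^ γ * ((2 : ℝ≥0∞) ^ (-γ)) ^ k) := by
          rw [ENNReal.mul_rpow_of_nonneg _ _ hγ.le, ENNReal.inv_rpow, ← ENNReal.rpow_neg,
            ENNReal.pow_rpow_comm]
  calc ∑ z ∈ pathSteps j, ((R / 2 ^ z.1 : ℕ) : ℝ≥0∞) ^ (γ - 1)
      = ∑ k ∈ range R, ∑ i, ∑ _t ∈ range (numSteps j k i), ((R / 2 ^ k : ℕ) : ℝ≥0∞) ^ (γ - 1) :=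
        sum_pathSteps j _
    _ ≤ ∑ k ∈ range R, d * ((R : ℝ≥0∞) ^ γ * ((2 : ℝ≥0∞) ^ (-γ)) ^ k) :=
        sum_le_sum fun k _ => hlevel k
    _ ≤ ∑' k, d * ((R : ℝ≥0∞) ^ γ * ((2 : ℝ≥0∞) ^ (-γ)) ^ k) := ENNReal.sum_le_tsum _
    _ = d * (1 - (2 : ℝ≥0∞) ^ (-γ))⁻¹ * (R : ℝ≥0∞) ^ γ := by
        rw [ENNReal.tsum_mul_left, ENNReal.tsum_mul_left, ENNReal.tsum_geometric]; ring

lemma rpow_sum_pathSteps_le {p β : ℝ} (hp : 1 < p) (hβ : β < p - 1) (j : Fin d → ℤ)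
    (D : ℕ × Fin d × ℕ → ℝ≥0∞) :
    (∑ z ∈ pathSteps j, D z) ^ p
      ≤ (d * (1 - (2 : ℝ≥0∞) ^ (-(1 - β / (p - 1))))⁻¹ *
          (supNorm j : ℝ≥0∞) ^ (1 - β / (p - 1))) ^ (p - 1) *
        ∑ z ∈ pathSteps j, ((supNorm j / 2 ^ z.1 : ℕ) : ℝ≥0∞) ^ β * D z ^ p := by
  set γ := 1 - β / (p - 1)
  set n : ℕ × Fin d × ℕ → ℝ≥0∞ := fun z => ((supNorm j / 2 ^ z.1 : ℕ) : ℝ≥0∞)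
  have hγ : 0 < γ := by have := (div_lt_one (by linarith : 0 < p - 1)).mpr hβ; linarith
  have hγβ : (γ - 1) * (1 - p) = β := by
    simp only [γ]; field_simp [(by linarith : p - 1 ≠ 0)]; ring
  have hn₀ : ∀ z ∈ pathSteps j, n z ≠ 0 := fun z hz =>
    Nat.cast_ne_zero.mpr (Nat.one_le_iff_ne_zero.mp (mem_pathSteps.mp hz).one_le_supNorm_div)
  calc (∑ z ∈ pathSteps j, D z) ^ p
      ≤ (∑ z ∈ pathSteps j, n z ^ (γ - 1)) ^ (p - 1) *
          ∑ z ∈ pathSteps j, (n z ^ (γ - 1)) ^ (1 - p) * D z ^ p :=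
        ENNReal.rpow_sum_le_weighted _ hp.le (fun z => n z ^ (γ - 1)) D
          (fun z hz => (ENNReal.rpow_pos (pos_iff_ne_zero.mpr (hn₀ z hz)) (by simp [n])).ne')
          (fun z hz => ENNReal.rpow_ne_top_of_ne_zero (hn₀ z hz) (by simp [n]))
    _ ≤ _ := by
        simp_rw [← ENNReal.rpow_mul, hγβ]
        gcongr
        exact sum_pathSteps_rpow_le j hγ

noncomputable def pathWeight (β : ℝ) (j : Fin d → ℤ) (z : ℕ × Fin d × ℕ) : ℝ≥0∞ :=
  if IsPathStep j z then
    (supNorm j : ℝ≥0∞) ^ (-(1 + β)) * ((supNorm j / 2 ^ z.1 : ℕ) : ℝ≥0∞) ^ β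
  else 0

noncomputable def siteConst (d : ℕ) (p β : ℝ) : ℝ≥0∞ :=
  (d * (1 - (2 : ℝ≥0∞) ^ (-(1 - β / (p - 1))))⁻¹) ^ (p - 1)

lemma siteConst_ne_top {p β : ℝ} (hp : 1 < p) (hβ : β < p - 1) : siteConst d p β ≠ ⊤ := by
  have := (div_lt_one (by linarith : 0 < p - 1)).mpr hβ
  exact ENNReal.rpow_ne_top_of_nonneg (by linarith)
    (ENNReal.mul_ne_top (ENNReal.natCast_ne_top d)
      (ENNReal.inv_one_sub_two_rpow_ne_top (by linarith)))

lemma ofReal_norm_le_sum_pathSteps {u : (Fin d → ℤ) → ℂ} (hu : u 0 = 0) (j : Fin d → ℤ) :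
    ENNReal.ofReal ‖u j‖
      ≤ ∑ z ∈ pathSteps j, ENNReal.ofReal ‖u (outer j z) - u (inner j z)‖ := by
  rw [← ENNReal.ofReal_sum_of_nonneg fun z _ => norm_nonneg _, eq_sum_pathSteps hu j]
  exact ENNReal.ofReal_le_ofReal (norm_sum_le _ _)

lemma ofReal_rpow_div_zsup_le {p β : ℝ} (hp : 1 < p) (hβ : β < p - 1)
    {u : (Fin d → ℤ) → ℂ} (hu : u 0 = 0) {j : Fin d → ℤ} (hj : j ≠ 0) :
    ENNReal.ofReal (‖u j‖ ^ p / zsup j ^ p) ≤ siteConst d p β *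
      ∑' z, pathWeight β j z * ENNReal.ofReal (‖u (outer j z) - u (inner j z)‖ ^ p) := by
  set R := supNorm j
  set γ := 1 - β / (p - 1)
  set C : ℝ≥0∞ := d * (1 - (2 : ℝ≥0∞) ^ (-γ))⁻¹
  set D : ℕ × Fin d × ℕ → ℝ≥0∞ := fun z => ENNReal.ofReal ‖u (outer j z) - u (inner j z)‖
  have hp₀ : 0 < p := by linarith
  have hR : (0 : ℝ) < R := Nat.cast_pos.mpr (supNorm_pos hj)
  have hexp : (C * (R : ℝ≥0∞) ^ γ) ^ (p - 1) * ((R : ℝ≥0∞) ^ p)⁻¹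
      = C ^ (p - 1) * (R : ℝ≥0∞) ^ (-(1 + β)) := by
    have hγp : γ * (p - 1) + -p = -(1 + β) := by
      simp only [γ]; field_simp [(by linarith : p - 1 ≠ 0)]; ring
    rw [ENNReal.mul_rpow_of_nonneg _ _ (by linarith), ← ENNReal.rpow_mul, ← ENNReal.rpow_neg,
      mul_assoc, ← ENNReal.rpow_add _ _ (by simpa using hR.ne') (ENNReal.natCast_ne_top R), hγp]
  calc ENNReal.ofReal (‖u j‖ ^ p / zsup j ^ p)
      = ENNReal.ofReal ‖u j‖ ^ p * ((R : ℝ≥0∞) ^ p)⁻¹ := by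
        rw [zsup_eq_supNorm, ENNReal.ofReal_div_of_pos (Real.rpow_pos_of_pos hR p), div_eq_mul_inv,
          ← ENNReal.ofReal_rpow_of_nonneg (norm_nonneg _) hp₀.le,
          ← ENNReal.ofReal_rpow_of_nonneg hR.le hp₀.le, ENNReal.ofReal_natCast]
    _ ≤ (C * (R : ℝ≥0∞) ^ γ) ^ (p - 1) *
          (∑ z ∈ pathSteps j, ((R / 2 ^ z.1 : ℕ) : ℝ≥0∞) ^ β * D z ^ p) * ((R : ℝ≥0∞) ^ p)⁻¹ := by
        gcongr
        exact (ENNReal.rpow_le_rpow (ofReal_norm_le_sum_pathSteps hu j) hp₀.le).trans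
          (rpow_sum_pathSteps_le hp hβ j D)
    _ = siteConst d p β * ∑ z ∈ pathSteps j,
          (R : ℝ≥0∞) ^ (-(1 + β)) * ((R / 2 ^ z.1 : ℕ) : ℝ≥0∞) ^ β * D z ^ p := by
        rw [mul_right_comm, hexp, mul_assoc, mul_sum]
        simp_rw [mul_assoc]
        rfl
    _ = siteConst d p β *
          ∑' z, pathWeight β j z * ENNReal.ofReal (‖u (outer j z) - u (inner j z)‖ ^ p) := by
        rw [tsum_eq_sum (s := pathSteps j) fun z hz => by
          rw [pathWeight, if_neg (mt mem_pathSteps.mpr hz), zero_mul]]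
        refine congrArg₂ _ rfl (sum_congr rfl fun z hz => ?_)
        rw [pathWeight, if_pos (mem_pathSteps.mp hz),
          ← ENNReal.ofReal_rpow_of_nonneg (norm_nonneg _) hp₀.le]

/-! ### Counting the sites whose path uses a given edge -/

noncomputable def boxAround (c : Fin d → ℤ) (r : Fin d → ℕ) : Finset (Fin d → ℤ) :=
  Fintype.piFinset fun l => Icc (c l - r l) (c l + r l)

lemma mem_boxAround {c x : Fin d → ℤ} {r : Fin d → ℕ} :
    x ∈ boxAround c r ↔ ∀ l, (x l - c l).natAbs ≤ r l := by
  simp only [boxAround, Fintype.mem_piFinset, mem_Icc]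
  exact forall_congr' fun l => by omega

lemma card_boxAround (c : Fin d → ℤ) (r : Fin d → ℕ) :
    (boxAround c r).card = ∏ l, (2 * r l + 1) := by
  rw [boxAround, Fintype.card_piFinset]
  exact prod_congr rfl fun l _ => by rw [Int.card_Icc]; omega

noncomputable def stepBox (k : ℕ) (i : Fin d) (a : Fin d → ℤ) : Finset (Fin d → ℤ) :=
  boxAround (fun l => if l < i then 2 ^ k * a l else if l = i then 0 else 2 ^ (k + 1) * a l)
    (fun l => 2 ^ (k + 1) * if l = i then supNorm a else 1)

lemma card_stepBox_le (k : ℕ) (i : Fin d) {a : Fin d → ℤ} (ha : a ≠ 0) :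
    (stepBox k i a).card ≤ 2 ^ ((k + 3) * d) * supNorm a := by
  have hm := supNorm_pos ha
  calc (stepBox k i a).card
      ≤ ∏ l, 2 ^ (k + 3) * (if l = i then supNorm a else 1) := by
        rw [stepBox, card_boxAround]
        refine prod_le_prod' fun l _ => ?_
        have hx : 1 ≤ (if l = i then supNorm a else 1) := by split_ifs <;> omega
        have hr : 1 ≤ 2 ^ (k + 1) * (if l = i then supNorm a else 1) :=
          Nat.mul_le_mul Nat.one_le_two_pow hx
        calc 2 * (2 ^ (k + 1) * (if l = i then supNorm a else 1)) + 1
            ≤ 4 * (2 ^ (k + 1) * (if l = i then supNorm a else 1)) := by omega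
          _ = 2 ^ (k + 3) * (if l = i then supNorm a else 1) := by ring
    _ = 2 ^ ((k + 3) * d) * supNorm a := by
        rw [prod_mul_distrib, prod_ite_eq' univ i, prod_const, card_univ, Fintype.card_fin,
          ← pow_mul, mul_comm (k + 3)]
        simp

lemma IsPathStep.mem_stepBox {j : Fin d → ℤ} {z : ℕ × Fin d × ℕ} (h : IsPathStep j z) :
    j ∈ stepBox z.1 z.2.1 (outer j z) := by
  rw [stepBox, mem_boxAround]
  intro l
  rcases lt_trichotomy l z.2.1 with hl | rfl | hl
  · have hout : outer j z l = coarse j z.1 l := by simp [outer, pathPt, coarse, signed, hl]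
    have := natAbs_sub_two_pow_mul_coarse_lt j z.1 l
    simp only [hl, hl.ne, if_true, if_false, hout, mul_one, pow_succ]
    omega
  · simp only [lt_irrefl, if_false, if_true, Int.sub_zero]
    have hout := h.natAbs_outer
    have hq := div_two_pow_succ (j z.2.1).natAbs z.1
    calc (j z.2.1).natAbs
        ≤ 2 ^ z.1 * ((j z.2.1).natAbs / 2 ^ z.1 + 1) :=
          (Nat.lt_mul_div_succ _ (Nat.two_pow_pos z.1)).le
      _ ≤ 2 ^ z.1 * (2 * supNorm (outer j z)) := by
          have := natAbs_le_supNorm (outer j z) z.2.1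
          gcongr
          omega
      _ = 2 ^ (z.1 + 1) * supNorm (outer j z) := by ring
  · have hout : outer j z l = coarse j (z.1 + 1) l := by
      simp [outer, pathPt, coarse, signed, hl.ne', not_lt.mpr hl.le]
    have := natAbs_sub_two_pow_mul_coarse_lt j (z.1 + 1) l
    simp only [hl.ne', not_lt.mpr hl.le, if_false, hout, mul_one]
    omega

lemma IsPathStep.pathWeight_le {β : ℝ} {j : Fin d → ℤ} {z : ℕ × Fin d × ℕ} (h : IsPathStep j z)
    (hβ : -1 ≤ β) :
    pathWeight β j z ≤ ((2 : ℝ≥0∞) ^ z.1) ^ (-(1 + β)) * (supNorm (outer j z) : ℝ≥0∞)⁻¹ := by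
  set n := supNorm j / 2 ^ z.1
  have hn₀ : (n : ℝ≥0∞) ≠ 0 := Nat.cast_ne_zero.mpr (Nat.one_le_iff_ne_zero.mp h.one_le_supNorm_div)
  have hR : (2 : ℝ≥0∞) ^ z.1 * n ≤ supNorm j := by exact_mod_cast Nat.mul_div_le _ _
  have hm : (supNorm (outer j z) : ℝ≥0∞) ≤ n := Nat.cast_le.mpr h.supNorm_outer_le
  rw [pathWeight, if_pos h]
  calc (supNorm j : ℝ≥0∞) ^ (-(1 + β)) * (n : ℝ≥0∞) ^ β
      ≤ ((2 : ℝ≥0∞) ^ z.1 * n) ^ (-(1 + β)) * (n : ℝ≥0∞) ^ β := by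
        rw [ENNReal.rpow_neg, ENNReal.rpow_neg]
        gcongr
        linarith
    _ = ((2 : ℝ≥0∞) ^ z.1) ^ (-(1 + β)) * (n : ℝ≥0∞)⁻¹ := by
        rw [ENNReal.mul_rpow_of_ne_zero (by simp) hn₀, mul_assoc,
          ← ENNReal.rpow_add _ _ hn₀ (ENNReal.natCast_ne_top n), show -(1 + β) + β = -1 by ring,
          ENNReal.rpow_neg_one]
    _ ≤ _ := by gcongr

lemma tsum_ite_outer_eq_le {β : ℝ} (hβ : -1 ≤ β) (j a : Fin d → ℤ) (k : ℕ) (i : Fin d) :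
    ∑' t, (if outer j (k, i, t) = a then pathWeight β j (k, i, t) else 0)
      ≤ if j ∈ stepBox k i a then ((2 : ℝ≥0∞) ^ k) ^ (-(1 + β)) * (supNorm a : ℝ≥0∞)⁻¹ else 0 := by
  have hzero : ∀ t, ¬ (IsPathStep j (k, i, t) ∧ outer j (k, i, t) = a) →
      (if outer j (k, i, t) = a then pathWeight β j (k, i, t) else 0) = 0 := by
    intro t h
    rcases not_and_or.mp h with h | h
    · simp [pathWeight, h]
    · simp [h]
  set t₀ := (a i).natAbs - (j i).natAbs / 2 ^ (k + 1) - 1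
  rw [tsum_eq_single t₀ fun t ht => hzero t fun ⟨h, hout⟩ => ht (by subst hout; exact h.step_eq)]
  by_cases h : IsPathStep j (k, i, t₀) ∧ outer j (k, i, t₀) = a
  · obtain ⟨h, hout⟩ := h
    have hbox := h.mem_stepBox
    rw [hout] at hbox
    rw [if_pos hout, if_pos hbox, ← hout]
    exact h.pathWeight_le hβ
  · rw [hzero _ h]
    exact zero_le

noncomputable def fiberConst (d : ℕ) (β : ℝ) : ℝ≥0∞ :=
  d * 2 ^ (3 * d) * (1 - (2 : ℝ≥0∞) ^ ((d : ℝ) - (1 + β)))⁻¹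

lemma fiberConst_ne_top {β : ℝ} (hβ : (d : ℝ) - 1 < β) : fiberConst d β ≠ ⊤ :=
  ENNReal.mul_ne_top (ENNReal.mul_ne_top (ENNReal.natCast_ne_top d) (ENNReal.pow_ne_top (by simp)))
    (ENNReal.inv_one_sub_two_rpow_ne_top (by linarith))

lemma card_stepBox_mul_le {β : ℝ} (k : ℕ) (i : Fin d) {a : Fin d → ℤ} (ha : a ≠ 0) :
    ((stepBox k i a).card : ℝ≥0∞) * (((2 : ℝ≥0∞) ^ k) ^ (-(1 + β)) * (supNorm a : ℝ≥0∞)⁻¹)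
      ≤ 2 ^ (3 * d) * ((2 : ℝ≥0∞) ^ ((d : ℝ) - (1 + β))) ^ k := by
  have hm₀ : (supNorm a : ℝ≥0∞) ≠ 0 := Nat.cast_ne_zero.mpr (supNorm_pos ha).ne'
  have hcard : ((stepBox k i a).card : ℝ≥0∞) ≤ 2 ^ (3 * d) * ((2 : ℝ≥0∞) ^ k) ^ d * supNorm a := by
    rw [← pow_mul, ← pow_add, ← Nat.add_mul, add_comm]
    exact_mod_cast card_stepBox_le k i ha
  calc ((stepBox k i a).card : ℝ≥0∞) * (((2 : ℝ≥0∞) ^ k) ^ (-(1 + β)) * (supNorm a : ℝ≥0∞)⁻¹)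
      ≤ 2 ^ (3 * d) * ((2 : ℝ≥0∞) ^ k) ^ d * supNorm a *
          (((2 : ℝ≥0∞) ^ k) ^ (-(1 + β)) * (supNorm a : ℝ≥0∞)⁻¹) := by gcongr
    _ = 2 ^ (3 * d) * (((2 : ℝ≥0∞) ^ k) ^ (d : ℝ) * ((2 : ℝ≥0∞) ^ k) ^ (-(1 + β))) *
          (supNorm a * (supNorm a : ℝ≥0∞)⁻¹) := by rw [ENNReal.rpow_natCast]; ring
    _ = 2 ^ (3 * d) * ((2 : ℝ≥0∞) ^ ((d : ℝ) - (1 + β))) ^ k := by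
        rw [ENNReal.mul_inv_cancel hm₀ (ENNReal.natCast_ne_top _), mul_one,
          ← ENNReal.rpow_add _ _ (by simp) (by simp), ← sub_eq_add_neg, ENNReal.pow_rpow_comm]

lemma tsum_tsum_ite_outer_eq_le {β : ℝ} (hβ : (d : ℝ) - 1 < β) (a : Fin d → ℤ) :
    ∑' j, ∑' z, (if outer j z = a then pathWeight β j z else 0) ≤ fiberConst d β := by
  have hβ' : -1 ≤ β := by linarith [(Nat.cast_nonneg d : (0 : ℝ) ≤ d)]
  by_cases ha : a = 0
  · have hzero : ∀ j z, (if outer j z = a then pathWeight β j z else 0) = 0 := by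
      intro j z
      by_cases h : IsPathStep j z
      · simp [ha, h.outer_ne_zero]
      · simp [pathWeight, h]
    simp [hzero]
  calc ∑' j, ∑' z, (if outer j z = a then pathWeight β j z else 0)
      = ∑' k, ∑' i, ∑' j, ∑' t,
          (if outer j (k, i, t) = a then pathWeight β j (k, i, t) else 0) := by
        simp_rw [ENNReal.tsum_prod']
        rw [ENNReal.tsum_comm]
        exact tsum_congr fun k => ENNReal.tsum_comm
    _ ≤ ∑' k, ∑' i, ∑' j, if j ∈ stepBox k i a then
          ((2 : ℝ≥0∞) ^ k) ^ (-(1 + β)) * (supNorm a : ℝ≥0∞)⁻¹ else 0 := by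
        gcongr with k i j
        exact tsum_ite_outer_eq_le hβ' j a k i
    _ = ∑' k, ∑ i : Fin d, ((stepBox k i a).card : ℝ≥0∞) *
          (((2 : ℝ≥0∞) ^ k) ^ (-(1 + β)) * (supNorm a : ℝ≥0∞)⁻¹) := by
        refine tsum_congr fun k => (tsum_fintype _).trans (sum_congr rfl fun i _ => ?_)
        rw [tsum_eq_sum (s := stepBox k i a) fun j hj => if_neg hj]
        simp
    _ ≤ ∑' k, d * (2 ^ (3 * d) * ((2 : ℝ≥0∞) ^ ((d : ℝ) - (1 + β))) ^ k) := by
        gcongr with k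
        refine (sum_le_sum fun i _ => card_stepBox_mul_le k i ha).trans ?_
        simp
    _ = fiberConst d β := by
        rw [ENNReal.tsum_mul_left, ENNReal.tsum_mul_left, ENNReal.tsum_geometric, fiberConst,
          mul_assoc]

lemma tsum_ite_edge (F : (Fin d → ℤ) → (Fin d → ℤ) → ℝ≥0∞) :
    ∑' e : (Fin d → ℤ) × (Fin d → ℤ), (if e.1 ≠ 0 ∧ nbrZ e.1 e.2 then F e.1 e.2 else 0)
      = ∑' (a : {a : Fin d → ℤ // a ≠ 0}) (b : {b : Fin d → ℤ // nbrZ a.1 b}), F a b := by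
  rw [ENNReal.tsum_prod']
  refine Eq.trans ?_
    (ENNReal.tsum_subtype_eq_tsum_ite (· ≠ 0) fun a => ∑' b : {b // nbrZ a b}, F a b).symm
  refine tsum_congr fun a => ?_
  rw [ENNReal.tsum_subtype_eq_tsum_ite (nbrZ a)]
  by_cases ha : a = 0 <;> simp [ha]

lemma tsum_tsum_pathWeight_mul_le {β : ℝ} (hβ : (d : ℝ) - 1 < β)
    (F : (Fin d → ℤ) → (Fin d → ℤ) → ℝ≥0∞) :
    ∑' j, ∑' z, pathWeight β j z * F (outer j z) (inner j z)
      ≤ fiberConst d β * ∑' (a : {a : Fin d → ℤ // a ≠ 0}) (b : {b : Fin d → ℤ // nbrZ a.1 b}),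
        F a b := by
  rw [← tsum_ite_edge,
    ← ENNReal.tsum_prod' (f := fun s => pathWeight β s.1 s.2 * F (outer s.1 s.2) (inner s.1 s.2))]
  set ψ : (Fin d → ℤ) × (ℕ × Fin d × ℕ) → (Fin d → ℤ) × (Fin d → ℤ) :=
    fun s => (outer s.1 s.2, inner s.1 s.2)
  calc ∑' s : (Fin d → ℤ) × (ℕ × Fin d × ℕ),
        pathWeight β s.1 s.2 * F (outer s.1 s.2) (inner s.1 s.2)
      = ∑' s, pathWeight β s.1 s.2 *
          (if (ψ s).1 ≠ 0 ∧ nbrZ (ψ s).1 (ψ s).2 then F (ψ s).1 (ψ s).2 else 0) := by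
        refine tsum_congr fun s => ?_
        by_cases h : IsPathStep s.1 s.2
        · simp [ψ, h.outer_ne_zero, h.nbrZ_outer_inner]
        · simp [pathWeight, h]
    _ ≤ _ := by
        refine ENNReal.tsum_mul_comp_le_of_fiber ψ _ _ fun e => ?_
        calc ∑' s : ψ ⁻¹' {e}, pathWeight β s.1.1 s.1.2
            = ∑' s : ψ ⁻¹' {e}, (fun s : (Fin d → ℤ) × (ℕ × Fin d × ℕ) =>
                if outer s.1 s.2 = e.1 then pathWeight β s.1 s.2 else 0) s :=
              tsum_congr fun s =>
                (if_pos (congrArg Prod.fst (Set.mem_singleton_iff.mp s.2))).symm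
          _ ≤ ∑' s : (Fin d → ℤ) × (ℕ × Fin d × ℕ),
                if outer s.1 s.2 = e.1 then pathWeight β s.1 s.2 else 0 :=
              ENNReal.tsum_comp_le_tsum_of_injective Subtype.val_injective _
          _ ≤ fiberConst d β := by
              rw [ENNReal.tsum_prod']
              exact tsum_tsum_ite_outer_eq_le hβ e.1

end HardyZ

open HardyZ

/-- Discrete Hardy inequality on the full lattice `ℤ^d` for `d < p`,
for functions with `u(0) = 0`. -/
theorem hardy_p_large_Z (d : ℕ) (p : ℝ) (hd : 0 < d) (hdp : (d : ℝ) < p) :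
    ∃ c : ℝ, 0 ≤ c ∧ ∀ u : (Fin d → ℤ) → ℂ, u 0 = 0 →
      (∑' (j : {j : Fin d → ℤ // j ≠ 0}),
          ENNReal.ofReal (‖u j.1‖ ^ p / zsup j.1 ^ p))
        ≤ ENNReal.ofReal c *
            ∑' (j : {j : Fin d → ℤ // j ≠ 0})
              (k : {k : Fin d → ℤ // nbrZ j.1 k}),
              ENNReal.ofReal (‖u j.1 - u k.1‖ ^ p) := by
  obtain ⟨β, hβd, hβp⟩ : ∃ β : ℝ, (d : ℝ) - 1 < β ∧ β < p - 1 :=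
    ⟨(p + d) / 2 - 1, by linarith, by linarith⟩
  have hp : 1 < p := lt_of_le_of_lt (by exact_mod_cast hd) hdp
  refine ⟨(siteConst d p β * fiberConst d β).toReal, ENNReal.toReal_nonneg, fun u hu => ?_⟩
  rw [ENNReal.ofReal_toReal (ENNReal.mul_ne_top (siteConst_ne_top hp hβp) (fiberConst_ne_top hβd)),
    mul_assoc]
  calc ∑' j : {j : Fin d → ℤ // j ≠ 0}, ENNReal.ofReal (‖u j.1‖ ^ p / zsup j.1 ^ p)
      ≤ ∑' j : {j : Fin d → ℤ // j ≠ 0}, siteConst d p β *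
          ∑' z, pathWeight β j.1 z * ENNReal.ofReal (‖u (outer j.1 z) - u (inner j.1 z)‖ ^ p) :=
        ENNReal.tsum_le_tsum fun j => ofReal_rpow_div_zsup_le hp hβp hu j.2
    _ ≤ ∑' j, siteConst d p β *
          ∑' z, pathWeight β j z * ENNReal.ofReal (‖u (outer j z) - u (inner j z)‖ ^ p) :=
        ENNReal.tsum_comp_le_tsum_of_injective Subtype.val_injective _
    _ ≤ _ := by
        rw [ENNReal.tsum_mul_left]
        gcongr
        exact tsum_tsum_pathWeight_mul_le hβd fun a b => ENNReal.ofReal (‖u a - u b‖ ^ p)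
end
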